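/- arXiv:2402.02749 — 5 statements merged into one kernel-verified Lean document; each statement's English description precedes it below -/
import Mathlib

section
/- Let d ∈ ℕ, n ≥ 1, 0 < α₁ ≤ … ≤ α_n. Then for all non-negative measurable functions f₁, …, f_{d+2n+1} on ℝ^{d+2n}, ∫_{ℝ^{d+2n+1}} ∏_{j=1}^{d+2n+1} f_j(π_j(x,t)) dx dt ≤ ∏_{j=1}^{d+2n+1} ‖f_j‖_{d+2n} (the nonlinear Loomis–Whitney inequality on H(d,α) with constant 1). -/
/-!
Write `m = d + 2n`, `F_j = f_j` for `j ≤ m` and `G = f_{m+1}`. For fixed `x`, the map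
`t ↦ π_j(x, t)` is `t ↦ (x̂_j, t + c_j(x))`, a translate of the fibre line, so Hölder's inequality
in `t` with `m` exponents equal to `m` bounds `∫ ∏_j F_j(π_j(x, t)) dt` by `∏_j Φ_j(x̂_j)^{1/m}`,
where `Φ_j(w) = ∫ F_j(w, s)^m ds`. Hölder in `x` with exponents `m` and `m/(m-1)` splits off
`‖G‖_m`, and the multi-function Loomis–Whitney inequality on `ℝ^m`,
`∫ ∏_j Φ_j(x̂_j)^{1/(m-1)} dx ≤ ∏_j ‖Φ_j‖_1^{1/(m-1)}`, where `‖Φ_j‖_1 = ‖F_j‖_m^m`, bounds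
the rest.
-/

open MeasureTheory ENNReal

/-- Delete the `j`-th coordinate of `x : ℝ^k` and append `s` as the last coordinate,
identifying `ℝ^{k-1} × ℝ` with `ℝ^k`. -/
noncomputable def deleteInsert {k : ℕ} (j : Fin k) (x : Fin k → ℝ) (s : ℝ) : Fin k → ℝ :=
  fun i => if _ : (i : ℕ) + 1 = k then s
    else if _ : (i : ℕ) < (j : ℕ) then x i
    else x ⟨(i : ℕ) + 1, by have := i.isLt; omega⟩

/-- The quadratic correction term in the `j`-th projection on the corank 1 Carnot group. -/
noncomputable def tshift (d n : ℕ) (α : Fin n → ℝ) (j : Fin (d + 2*n))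
    (x : Fin (d + 2*n) → ℝ) : ℝ :=
  if _ : (j : ℕ) < d then 0
  else (if ((j : ℕ) - d) % 2 = 0 then (1:ℝ) else -1) *
      (α ⟨((j : ℕ) - d) / 2, by have := j.isLt; omega⟩ / 2) *
      x ⟨d + 2 * (((j : ℕ) - d) / 2), by have := j.isLt; omega⟩ *
      x ⟨d + 2 * (((j : ℕ) - d) / 2) + 1, by have := j.isLt; omega⟩

/-- The `j`-th projection `π_j : H(d,α) → ℝ^{d+2n}` (for `1 ≤ j ≤ d+2n` in 1-based
numbering), where the target `ℝ^{d+2n-1} × ℝ` is identified with `ℝ^{d+2n}` by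
placing `x̂_j` in the first `d+2n-1` slots and the (shifted) `t`-variable in the
last slot. -/
noncomputable def carnotProj (d n : ℕ) (α : Fin n → ℝ) (j : Fin (d + 2*n))
    (p : (Fin (d + 2*n) → ℝ) × ℝ) : Fin (d + 2*n) → ℝ :=
  deleteInsert j p.1 (p.2 + tshift d n α j p.1)

/-- All `d+2n+1` projections, the last one being `π_{d+2n+1}(x,t) = x`. -/
noncomputable def carnotProjFull (d n : ℕ) (α : Fin n → ℝ) (j : Fin (d + 2*n + 1))
    (p : (Fin (d + 2*n) → ℝ) × ℝ) : Fin (d + 2*n) → ℝ :=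
  if h : (j : ℕ) < d + 2*n then carnotProj d n α ⟨j, h⟩ p else p.1

open Finset Function

theorem ENNReal.rpow_inv_rpow_div (a : ℝ≥0∞) {p : ℝ} (hp : p ≠ 0) (q : ℝ) :
    (a ^ p⁻¹) ^ (p / q) = a ^ q⁻¹ := by
  rw [← ENNReal.rpow_mul, inv_mul_eq_div, div_div_cancel_left' hp]

section LoomisWhitney

variable {δ : Type*} [DecidableEq δ] {X : δ → Type*} [∀ i, MeasurableSpace (X i)]
  {μ : ∀ i, Measure (X i)}

theorem lmarginal_mul_rpow_le (s : Finset δ) {f g : (∀ i, X i) → ℝ≥0∞} (hf : Measurable f)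
    (hg : Measurable g) {p q : ℝ} (hp : 0 ≤ p) (hq : 0 ≤ q) (hpq : p + q = 1) (x : ∀ i, X i) :
    (∫⋯∫⁻_s, (fun z => f z ^ p * g z ^ q) ∂μ) x
      ≤ (∫⋯∫⁻_s, f ∂μ) x ^ p * (∫⋯∫⁻_s, g ∂μ) x ^ q :=
  ENNReal.lintegral_mul_norm_pow_le (hf.comp measurable_updateFinset).aemeasurable
    (hg.comp measurable_updateFinset).aemeasurable hp hq hpq

theorem lintegral_update_prod_rpow_card_inv_le (i : δ) {t : Finset δ} (ht : t.Nonempty)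
    {g : δ → (∀ i, X i) → ℝ≥0∞} (hg : ∀ j ∈ t, Measurable (g j)) (z : ∀ i, X i) :
    ∫⁻ y, ∏ j ∈ t, g j (update z i y) ^ (#t : ℝ)⁻¹ ∂μ i
      ≤ ∏ j ∈ t, (∫⋯∫⁻_{i}, g j ∂μ) z ^ (#t : ℝ)⁻¹ := by
  simp only [lmarginal_singleton]
  refine ENNReal.lintegral_prod_norm_pow_le t
    (fun j hj => ((hg j hj).comp (measurable_update z)).aemeasurable) ?_ fun _ _ => by positivity
  rw [sum_const, nsmul_eq_mul, mul_inv_cancel₀ (by simpa using ht.ne_empty)]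

variable [∀ i, SigmaFinite (μ i)]

theorem lmarginal_pair_mul_eq {a b : δ} (hab : a ≠ b) {f g : (∀ i, X i) → ℝ≥0∞}
    (hf : Measurable f) (hg : Measurable g) (hfa : ∀ x y, f (update x a y) = f x)
    (hgb : ∀ x y, g (update x b y) = g x) (x : ∀ i, X i) :
    (∫⋯∫⁻_{a, b}, f * g ∂μ) x = (∫⋯∫⁻_{b}, f ∂μ) x * (∫⋯∫⁻_{a}, g ∂μ) x := by
  rw [lmarginal_insert _ (hf.mul hg) (by simpa using hab)]
  simp only [lmarginal_singleton, Pi.mul_apply]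
  calc ∫⁻ ya, ∫⁻ yb, f (update (update x a ya) b yb) * g (update (update x a ya) b yb) ∂μ b ∂μ a
      = ∫⁻ ya, (∫⁻ yb, f (update x b yb) ∂μ b) * g (update x a ya) ∂μ a := by
        refine lintegral_congr fun ya => ?_
        simp_rw [hgb, update_comm hab, hfa]
        exact lintegral_mul_const _ (hf.comp (measurable_update x))
    _ = _ := lintegral_const_mul _ (hg.comp (measurable_update x))

theorem lmarginal_erase_lmarginal_singleton {i j : δ} {t : Finset δ} (hi : i ∉ t) (hij : j ≠ i)
    {g : (∀ i, X i) → ℝ≥0∞} (hg : Measurable g) :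
    ∫⋯∫⁻_(t.erase j), ∫⋯∫⁻_{i}, g ∂μ ∂μ = ∫⋯∫⁻_((insert i t).erase j), g ∂μ := by
  rw [erase_insert_of_ne hij.symm, lmarginal_insert' _ hg (fun h => hi (mem_of_mem_erase h)),
    lmarginal_singleton]

/-- The inductive step of the Loomis–Whitney inequality: Hölder in `xᵢ` turns the integrand into
`gᵢ ^ (1/k) * ∏ⱼ Hⱼ ^ (1/k)` with `Hⱼ = ∫ gⱼ dxᵢ`, Hölder with exponents `k` and `k/(k-1)` in the
remaining variables splits off `gᵢ`, and the inequality for `t` applies to the `Hⱼ`. -/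
theorem lmarginal_insert_prod_rpow_le_of_le {i : δ} {t : Finset δ} (hi : i ∉ t) (ht : 2 ≤ #t)
    {g : δ → (∀ i, X i) → ℝ≥0∞} (hg : ∀ l ∈ insert i t, Measurable (g l))
    (hgi : ∀ x y, g i (update x i y) = g i x) (x : ∀ i, X i)
    (ih : (∫⋯∫⁻_t, (fun z => ∏ j ∈ t, (∫⋯∫⁻_{i}, g j ∂μ) z ^ ((#t : ℝ) - 1)⁻¹) ∂μ) x
      ≤ ∏ j ∈ t, (∫⋯∫⁻_(t.erase j), ∫⋯∫⁻_{i}, g j ∂μ ∂μ) x ^ ((#t : ℝ) - 1)⁻¹) :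
    (∫⋯∫⁻_(insert i t), (fun z => ∏ l ∈ insert i t, g l z ^ (#t : ℝ)⁻¹) ∂μ) x
      ≤ ∏ l ∈ insert i t, (∫⋯∫⁻_((insert i t).erase l), g l ∂μ) x ^ (#t : ℝ)⁻¹ := by
  set k : ℝ := (#t : ℝ)
  have hk1 : 1 < k := by simp only [k]; exact_mod_cast ht
  have hk0 : k - 1 ≠ 0 := by linarith
  have hq : 0 ≤ (k - 1) / k := div_nonneg (by linarith) (by linarith)
  have hgt : ∀ j ∈ t, Measurable (g j) := fun j hj => hg j (mem_insert_of_mem hj)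
  set H : δ → (∀ i, X i) → ℝ≥0∞ := fun j => ∫⋯∫⁻_{i}, g j ∂μ
  have hHmeas : Measurable fun z => ∏ j ∈ t, H j z ^ (k - 1)⁻¹ :=
    measurable_prod _ fun j hj => ((hgt j hj).lmarginal μ).pow_const _
  calc (∫⋯∫⁻_(insert i t), (fun z => ∏ l ∈ insert i t, g l z ^ k⁻¹) ∂μ) x
      = (∫⋯∫⁻_t, (fun z => ∫⁻ y, ∏ l ∈ insert i t, g l (update z i y) ^ k⁻¹ ∂μ i) ∂μ) x := by
        rw [lmarginal_insert' _ (measurable_prod _ fun l hl => (hg l hl).pow_const _) hi]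
    _ ≤ (∫⋯∫⁻_t, (fun z => g i z ^ k⁻¹ * ∏ j ∈ t, H j z ^ k⁻¹) ∂μ) x := by
        refine lmarginal_mono (fun z => ?_) x
        simp only [prod_insert hi, hgi]
        have hslice : Measurable fun y => ∏ l ∈ t, g l (update z i y) ^ k⁻¹ :=
          measurable_prod _ fun l hl => ((hgt l hl).comp (measurable_update z)).pow_const _
        rw [lintegral_const_mul _ hslice]
        gcongr
        exact lintegral_update_prod_rpow_card_inv_le i (card_pos.mp (by omega)) hgt z
    _ = (∫⋯∫⁻_t, (fun z => g i z ^ k⁻¹ * (∏ j ∈ t, H j z ^ (k - 1)⁻¹) ^ ((k - 1) / k)) ∂μ) x := by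
        simp only [← ENNReal.prod_rpow_of_nonneg hq, ENNReal.rpow_inv_rpow_div _ hk0]
    _ ≤ (∫⋯∫⁻_t, g i ∂μ) x ^ k⁻¹ *
          (∫⋯∫⁻_t, (fun z => ∏ j ∈ t, H j z ^ (k - 1)⁻¹) ∂μ) x ^ ((k - 1) / k) :=
        lmarginal_mul_rpow_le t (hg i (mem_insert_self i t)) hHmeas (by positivity) hq
          (by field_simp; ring) x
    _ ≤ (∫⋯∫⁻_t, g i ∂μ) x ^ k⁻¹ *
          (∏ j ∈ t, (∫⋯∫⁻_(t.erase j), H j ∂μ) x ^ (k - 1)⁻¹) ^ ((k - 1) / k) := by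
        gcongr
    _ = ∏ l ∈ insert i t, (∫⋯∫⁻_((insert i t).erase l), g l ∂μ) x ^ k⁻¹ := by
        rw [prod_insert hi, erase_insert hi, ← ENNReal.prod_rpow_of_nonneg hq]
        congr 1
        refine prod_congr rfl fun j hj => ?_
        rw [lmarginal_erase_lmarginal_singleton hi (ne_of_mem_of_not_mem hj hi) (hgt j hj),
          ENNReal.rpow_inv_rpow_div _ hk0]

theorem lmarginal_prod_rpow_le_prod (s : Finset δ) (hs : 2 ≤ #s) {g : δ → (∀ i, X i) → ℝ≥0∞}
    (hg : ∀ i ∈ s, Measurable (g i)) (hind : ∀ i ∈ s, ∀ x y, g i (update x i y) = g i x)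
    (x : ∀ i, X i) :
    (∫⋯∫⁻_s, (fun z => ∏ i ∈ s, g i z ^ ((#s : ℝ) - 1)⁻¹) ∂μ) x
      ≤ ∏ i ∈ s, (∫⋯∫⁻_(s.erase i), g i ∂μ) x ^ ((#s : ℝ) - 1)⁻¹ := by
  induction s using Finset.induction generalizing g x with
  | empty => simp at hs
  | insert i t hi ih =>
    have hk : ((#(insert i t) : ℕ) : ℝ) - 1 = #t := by
      rw [card_insert_of_notMem hi]; push_cast; ring
    rw [hk]
    obtain ht | ht : #t = 1 ∨ 2 ≤ #t := by rw [card_insert_of_notMem hi] at hs; omega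
    · obtain ⟨j, rfl⟩ := card_eq_one.mp ht
      have hij : i ≠ j := by simpa using hi
      simp only [card_singleton, Nat.cast_one, inv_one, ENNReal.rpow_one, prod_pair hij,
        erase_insert hi, erase_insert_of_ne hij, erase_singleton, insert_empty]
      exact (lmarginal_pair_mul_eq hij (hg i (by simp)) (hg j (by simp)) (hind i (by simp))
        (hind j (by simp)) x).le
    · refine lmarginal_insert_prod_rpow_le_of_le hi ht hg (hind i (mem_insert_self i t)) x
        (ih ht (fun j hj => (hg j (mem_insert_of_mem hj)).lmarginal μ) (fun j hj z y => ?_) x)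
      have hji : j ∉ ({i} : Finset δ) := by simpa using ne_of_mem_of_not_mem hj hi
      simp only [lmarginal_update_of_notMem (hg j (mem_insert_of_mem hj)) hji, comp_def,
        hind j (mem_insert_of_mem hj)]

end LoomisWhitney

section FinPi

variable {α : Type*} [MeasurableSpace α] (μ : Measure α) [SigmaFinite μ] {M : ℕ}

theorem measurePreserving_snoc :
    MeasurePreserving (fun p : (Fin M → α) × α => Fin.snoc p.1 p.2)
      ((Measure.pi fun _ => μ).prod μ) (Measure.pi fun _ => μ) := by
  have h := (measurePreserving_piFinSuccAbove (fun _ : Fin (M + 1) => μ) (Fin.last M)).symm.comp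
    (Measure.measurePreserving_swap (μ := Measure.pi fun _ : Fin M => μ) (ν := μ))
  convert h using 1
  funext p
  simp [MeasurableEquiv.piFinSuccAbove, Fin.insertNthEquiv]

theorem lintegral_lintegral_snoc {F : (Fin (M + 1) → α) → ℝ≥0∞} (hF : Measurable F) :
    ∫⁻ w, ∫⁻ s, F (Fin.snoc w s) ∂μ ∂Measure.pi (fun _ => μ)
      = ∫⁻ y, F y ∂Measure.pi (fun _ => μ) := by
  rw [← (measurePreserving_snoc μ).lintegral_comp hF]
  exact (lintegral_prod _ (hF.comp (measurePreserving_snoc μ).measurable).aemeasurable).symm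

theorem lmarginal_erase_comp_succAbove (j : Fin (M + 1)) {φ : (Fin M → α) → ℝ≥0∞}
    (hφ : Measurable φ) (x : Fin (M + 1) → α) :
    (∫⋯∫⁻_(univ.erase j), (fun y => φ (y ∘ j.succAbove)) ∂fun _ => μ) x
      = ∫⁻ w, φ w ∂Measure.pi (fun _ => μ) := by
  have himage : univ.image j.succAbove = univ.erase j := by
    rw [Fin.univ_succAbove _ j, erase_cons, map_eq_image, Fin.coe_succAboveEmb]
  rw [← himage]
  refine (lmarginal_image Fin.succAbove_right_injective univ hφ x).trans ?_
  rw [lmarginal_univ]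

theorem lintegral_prod_comp_succAbove_rpow_le (hM : 1 ≤ M)
    {φ : Fin (M + 1) → (Fin M → α) → ℝ≥0∞} (hφ : ∀ j, Measurable (φ j)) :
    ∫⁻ x, ∏ j, φ j (x ∘ j.succAbove) ^ (M : ℝ)⁻¹ ∂Measure.pi (fun _ => μ)
      ≤ ∏ j, (∫⁻ w, φ j w ∂Measure.pi fun _ => μ) ^ (M : ℝ)⁻¹ := by
  cases isEmpty_or_nonempty (Fin (M + 1) → α)
  · simp
  inhabit Fin (M + 1) → α
  have hind : ∀ j ∈ univ, ∀ (x : Fin (M + 1) → α) y,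
      φ j (update x j y ∘ j.succAbove) = φ j (x ∘ j.succAbove) := by
    intro j _ x y
    congr 1
    funext k
    exact update_of_ne (Fin.succAbove_ne j k) y x
  have hcard : ((#(univ : Finset (Fin (M + 1))) : ℕ) : ℝ) - 1 = M := by simp
  have h := lmarginal_prod_rpow_le_prod (μ := fun _ => μ) univ (by simp; omega)
    (g := fun j x => φ j (x ∘ j.succAbove))
    (fun j _ => (hφ j).comp (measurable_pi_lambda _ fun k => measurable_pi_apply _)) hind default
  rw [hcard] at h
  rw [lintegral_eq_lmarginal_univ default]
  refine h.trans_eq (prod_congr rfl fun j _ => ?_)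
  rw [lmarginal_erase_comp_succAbove μ j (hφ j)]

end FinPi

theorem lintegral_prod_comp_add_le {G ι : Type*} [MeasurableSpace G] [AddGroup G]
    [MeasurableAdd G] (μ : Measure G) [μ.IsAddRightInvariant] [Fintype ι] [Nonempty ι]
    {φ : ι → G → ℝ≥0∞} (hφ : ∀ i, Measurable (φ i)) (c : ι → G) :
    ∫⁻ t, ∏ i, φ i (t + c i) ∂μ
      ≤ ∏ i, (∫⁻ t, φ i t ^ (Fintype.card ι : ℝ) ∂μ) ^ (Fintype.card ι : ℝ)⁻¹ := by
  have hr : (Fintype.card ι : ℝ) ≠ 0 := by positivity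
  calc ∫⁻ t, ∏ i, φ i (t + c i) ∂μ
      = ∫⁻ t, ∏ i, (φ i (t + c i) ^ (Fintype.card ι : ℝ)) ^ (Fintype.card ι : ℝ)⁻¹ ∂μ := by
        simp only [ENNReal.rpow_rpow_inv hr]
    _ ≤ ∏ i, (∫⁻ t, φ i (t + c i) ^ (Fintype.card ι : ℝ) ∂μ) ^ (Fintype.card ι : ℝ)⁻¹ :=
        ENNReal.lintegral_prod_norm_pow_le _
          (fun i _ => (((hφ i).comp (measurable_add_const _)).pow_const _).aemeasurable)
          (by simp [hr]) fun _ _ => by positivity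
    _ = _ := prod_congr rfl fun i _ => by
        rw [lintegral_add_right_eq_self (fun t => φ i t ^ (Fintype.card ι : ℝ)) (c i)]

theorem eLpNorm_natCast_eq_lintegral {α : Type*} [MeasurableSpace α] {μ : Measure α}
    (F : α → ℝ≥0∞) {m : ℕ} (hm : m ≠ 0) :
    eLpNorm F m μ = (∫⁻ x, F x ^ (m : ℝ) ∂μ) ^ (m : ℝ)⁻¹ := by
  simp [eLpNorm_eq_lintegral_rpow_enorm_toReal (Nat.cast_ne_zero.mpr hm) (natCast_ne_top m)]

theorem deleteInsert_eq_snoc {M : ℕ} (j : Fin (M + 1)) (x : Fin (M + 1) → ℝ) (s : ℝ) :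
    deleteInsert j x s = Fin.snoc (x ∘ j.succAbove) s := by
  funext i
  induction i using Fin.lastCases with
  | last => simp [deleteInsert]
  | cast k =>
    rw [Fin.snoc_castSucc, deleteInsert, dif_neg (by simp only [Fin.val_castSucc]; omega)]
    by_cases hkj : k.castSucc < j
    · rw [dif_pos (Fin.lt_def.mp hkj), comp_apply, Fin.succAbove_of_castSucc_lt _ _ hkj]
    · rw [dif_neg (mt Fin.lt_def.mpr hkj), comp_apply,
        Fin.succAbove_of_le_castSucc _ _ (not_lt.mp hkj)]
      rfl

theorem measurable_deleteInsert {M : ℕ} (j : Fin (M + 1)) :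
    Measurable (fun p : (Fin (M + 1) → ℝ) × ℝ => deleteInsert j p.1 p.2) := by
  have h : (fun p : (Fin (M + 1) → ℝ) × ℝ => deleteInsert j p.1 p.2)
      = (fun p : (Fin M → ℝ) × ℝ => Fin.snoc p.1 p.2) ∘ fun p => (p.1 ∘ j.succAbove, p.2) :=
    funext fun p => deleteInsert_eq_snoc j p.1 p.2
  rw [h]
  exact (measurePreserving_snoc volume).measurable.comp (by fun_prop)

theorem lintegral_prod_comp_deleteInsert_add_le {M : ℕ}
    {F : Fin (M + 1) → (Fin (M + 1) → ℝ) → ℝ≥0∞} (hF : ∀ j, Measurable (F j))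
    (c : Fin (M + 1) → ℝ) (x : Fin (M + 1) → ℝ) :
    ∫⁻ t, ∏ j, F j (deleteInsert j x (t + c j))
      ≤ ∏ j, (∫⁻ s, F j (Fin.snoc (x ∘ j.succAbove) s) ^ ((M + 1 : ℕ) : ℝ))
          ^ ((M + 1 : ℕ) : ℝ)⁻¹ := by
  simp_rw [deleteInsert_eq_snoc]
  simpa using lintegral_prod_comp_add_le volume (fun j => (hF j).comp
    ((measurePreserving_snoc volume).measurable.comp measurable_prodMk_left)) c

theorem lintegral_prod_comp_deleteInsert_mul_le {m : ℕ} (hm : 2 ≤ m)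
    {F : Fin m → (Fin m → ℝ) → ℝ≥0∞} (hF : ∀ j, Measurable (F j))
    {G : (Fin m → ℝ) → ℝ≥0∞} (hG : Measurable G) (c : Fin m → (Fin m → ℝ) → ℝ) :
    ∫⁻ p : (Fin m → ℝ) × ℝ, (∏ j, F j (deleteInsert j p.1 (p.2 + c j p.1))) * G p.1
      ≤ (∏ j, eLpNorm (F j) m volume) * eLpNorm G m volume := by
  obtain ⟨M, rfl⟩ : ∃ M, m = M + 1 := ⟨m - 1, by omega⟩
  set r : ℝ := ((M + 1 : ℕ) : ℝ)
  have hM : (M : ℝ) ≠ 0 := Nat.cast_ne_zero.mpr (by omega)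
  set Φ : Fin (M + 1) → (Fin M → ℝ) → ℝ≥0∞ := fun j w => ∫⁻ s, F j (Fin.snoc w s) ^ r
  have hΦ : ∀ j, Measurable (Φ j) := fun j => Measurable.lintegral_prod_right'
    (((hF j).comp (measurePreserving_snoc volume).measurable).pow_const r)
  have hPΦ : Measurable fun x : Fin (M + 1) → ℝ => ∏ j, Φ j (x ∘ j.succAbove) ^ (M : ℝ)⁻¹ :=
    measurable_prod _ fun j _ =>
      ((hΦ j).comp (measurable_pi_lambda _ fun k => measurable_pi_apply _)).pow_const _
  simp only [eLpNorm_natCast_eq_lintegral _ M.succ_ne_zero]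
  calc ∫⁻ p : (Fin (M + 1) → ℝ) × ℝ, (∏ j, F j (deleteInsert j p.1 (p.2 + c j p.1))) * G p.1
      ≤ ∫⁻ x, ∫⁻ t, (∏ j, F j (deleteInsert j x (t + c j x))) * G x := by
        rw [Measure.volume_eq_prod]
        exact lintegral_prod_le _
    _ ≤ ∫⁻ x, G x * ∏ j, Φ j (x ∘ j.succAbove) ^ r⁻¹ := by
        refine lintegral_mono fun x => ?_
        have hfiber : Measurable fun t => ∏ j, F j (deleteInsert j x (t + c j x)) :=
          measurable_prod _ fun j _ => (hF j).comp ((measurable_deleteInsert j).comp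
            (measurable_prodMk_left.comp (measurable_add_const _)))
        rw [lintegral_mul_const _ hfiber, mul_comm]
        gcongr
        exact lintegral_prod_comp_deleteInsert_add_le hF (fun j => c j x) x
    _ = ∫⁻ x, (G x ^ r) ^ r⁻¹ * (∏ j, Φ j (x ∘ j.succAbove) ^ (M : ℝ)⁻¹) ^ ((M : ℝ) / r) := by
        simp only [ENNReal.rpow_rpow_inv (show r ≠ 0 by positivity),
          ← ENNReal.prod_rpow_of_nonneg (show 0 ≤ (M : ℝ) / r by positivity),
          ENNReal.rpow_inv_rpow_div _ hM]
    _ ≤ (∫⁻ x, G x ^ r) ^ r⁻¹ * (∫⁻ x, ∏ j, Φ j (x ∘ j.succAbove) ^ (M : ℝ)⁻¹) ^ ((M : ℝ) / r) :=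
        ENNReal.lintegral_mul_norm_pow_le (hG.pow_const r).aemeasurable hPΦ.aemeasurable
          (by positivity) (by positivity) (by simp only [r]; field_simp; push_cast; ring)
    _ ≤ (∫⁻ x, G x ^ r) ^ r⁻¹ * (∏ j, (∫⁻ w, Φ j w) ^ (M : ℝ)⁻¹) ^ ((M : ℝ) / r) := by
        gcongr
        exact lintegral_prod_comp_succAbove_rpow_le volume (by omega) hΦ
    _ = (∏ j, (∫⁻ y, F j y ^ r) ^ r⁻¹) * (∫⁻ y, G y ^ r) ^ r⁻¹ := by
        rw [mul_comm, ← ENNReal.prod_rpow_of_nonneg (by positivity)]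
        congr 1
        refine prod_congr rfl fun j _ => ?_
        rw [ENNReal.rpow_inv_rpow_div _ hM, volume_pi, volume_pi,
          lintegral_lintegral_snoc volume ((hF j).pow_const r)]

theorem nonlinear_loomis_whitney_corank_one_general (d n : ℕ) (hn : 1 ≤ n)
    (α : Fin n → ℝ)
    (f : Fin (d + 2*n + 1) → (Fin (d + 2*n) → ℝ) → ℝ)
    (hf : ∀ j, Measurable (f j)) (hf0 : ∀ j y, 0 ≤ f j y) :
    ∫⁻ p : (Fin (d + 2*n) → ℝ) × ℝ,
        ∏ j, ENNReal.ofReal (f j (carnotProjFull d n α j p)) ≤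
      ∏ j : Fin (d + 2*n + 1), eLpNorm (f j) ((d + 2*n : ℕ) : ℝ≥0∞) volume := by
  have hnorm : ∀ j, eLpNorm (f j) ((d + 2*n : ℕ) : ℝ≥0∞) volume
      = eLpNorm (fun y => ENNReal.ofReal (f j y)) (d + 2*n : ℕ) volume := by
    intro j
    rw [← eLpNorm_enorm]
    simp_rw [Real.enorm_eq_ofReal (hf0 j _)]
  have hsplit : ∀ p : (Fin (d + 2*n) → ℝ) × ℝ,
      ∏ j, ENNReal.ofReal (f j (carnotProjFull d n α j p))
        = (∏ j : Fin (d + 2*n), ENNReal.ofReal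
            (f j.castSucc (deleteInsert j p.1 (p.2 + tshift d n α j p.1))))
          * ENNReal.ofReal (f (Fin.last _) p.1) := by
    intro p
    simp [Fin.prod_univ_castSucc, carnotProjFull, carnotProj]
  simp_rw [hsplit, hnorm, Fin.prod_univ_castSucc]
  exact lintegral_prod_comp_deleteInsert_mul_le (by omega)
    (fun j => ENNReal.measurable_ofReal.comp (hf _)) (ENNReal.measurable_ofReal.comp (hf _))
    (tshift d n α)

/-- **Nonlinear Loomis–Whitney inequality on `H(d,α)` with constant 1**
(Proposition 1.9 of the paper): for all non-negative measurable
`f₁, …, f_{d+2n+1}` on `ℝ^{d+2n}`,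
`∫ ∏_{j=1}^{d+2n+1} f_j ∘ π_j ≤ ∏_{j=1}^{d+2n+1} ‖f_j‖_{d+2n}`. -/
theorem nonlinear_loomis_whitney_corank_one (d n : ℕ) (hn : 1 ≤ n)
    (α : Fin n → ℝ) (hα : ∀ i, 0 < α i) (hmono : Monotone α)
    (f : Fin (d + 2*n + 1) → (Fin (d + 2*n) → ℝ) → ℝ)
    (hf : ∀ j, Measurable (f j)) (hf0 : ∀ j y, 0 ≤ f j y) :
    ∫⁻ p : (Fin (d + 2*n) → ℝ) × ℝ,
        ∏ j, ENNReal.ofReal (f j (carnotProjFull d n α j p)) ≤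
      ∏ j : Fin (d + 2*n + 1), eLpNorm (f j) ((d + 2*n : ℕ) : ℝ≥0∞) volume :=
  nonlinear_loomis_whitney_corank_one_general d n hn α f hf hf0
end

section
/- Let (Ω, μ) be a measure space, let f be a probability density on Ω with finite entropy (∫ f|ln f| dμ < ∞), and let φ be a measurable function on Ω with ∫ e^φ dμ < ∞. Then the integral ∫ fφ dμ is well defined in [−∞, +∞) (its positive part is integrable) and ∫_Ω f φ dμ ≤ S(f) + ln(∫_Ω e^φ dμ). -/
open MeasureTheory ENNReal

lemma mul_le_entropy_aux (a b : ℝ) (ha : 0 ≤ a) :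
    a * b ≤ a * Real.log a - a + Real.exp b := by
  rcases ha.eq_or_lt with h | h
  · rw [← h]
    simp
    positivity
  · have h1 := Real.add_one_le_exp (b - Real.log a)
    have h2 : Real.exp (b - Real.log a) = Real.exp b / a := by
      rw [Real.exp_sub, Real.exp_log h]
    rw [h2] at h1
    have h3 : (b - Real.log a + 1) * a ≤ Real.exp b := by
      rw [← le_div_iff₀ h]; linarith
    nlinarith

lemma ennreal_coe_eq_coe_toReal (A : ℝ≥0∞) (hA : A ≠ ⊤) :
    (A : EReal) = ((A.toReal : ℝ) : EReal) := by
  rw [← EReal.toReal_coe_ennreal,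
    EReal.coe_toReal (by simpa [EReal.coe_ennreal_eq_top_iff] using hA)
      (EReal.coe_ennreal_ne_bot _)]

lemma ofReal_max_zero (a : ℝ) : ENNReal.ofReal (max a 0) = ENNReal.ofReal a := by
  rcases le_total a 0 with h | h
  · rw [max_eq_right h, ENNReal.ofReal_zero, eq_comm, ENNReal.ofReal_eq_zero]
    exact h
  · rw [max_eq_left h]

/-- **Entropic inequality** (Proposition 2.1 of the paper): if `f` is a probability
density on `(Ω, μ)` with finite entropy `S(f) = ∫ f ln f dμ`, and `φ` is measurable
with `∫ e^φ dμ < ∞`, then `∫ f φ dμ` is well defined in `[-∞, ∞)` (its positive part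
is integrable) and `∫ f φ dμ ≤ S(f) + ln (∫ e^φ dμ)` (as extended reals). -/
theorem entropic_inequality {Ω : Type*} [MeasurableSpace Ω] (μ : Measure Ω)
    (f φ : Ω → ℝ) (hf : Measurable f) (hf0 : ∀ x, 0 ≤ f x)
    (hf1 : ∫⁻ x, ENNReal.ofReal (f x) ∂μ = 1)
    (hent : Integrable (fun x => f x * Real.log (f x)) μ)
    (hφ : Measurable φ)
    (hexp : Integrable (fun x => Real.exp (φ x)) μ) :
    Integrable (fun x => max (f x * φ x) 0) μ ∧
    ((∫⁻ x, ENNReal.ofReal (f x * φ x) ∂μ : ℝ≥0∞) : EReal) -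
        ((∫⁻ x, ENNReal.ofReal (-(f x * φ x)) ∂μ : ℝ≥0∞) : EReal) ≤
      (((∫ x, f x * Real.log (f x) ∂μ) +
          Real.log (∫ x, Real.exp (φ x) ∂μ) : ℝ) : EReal) := by
  have hfφmeas : Measurable (fun x => f x * φ x) := hf.mul hφ
  -- f is integrable with integral 1
  have hfint : Integrable f μ := by
    refine ⟨hf.aestronglyMeasurable, ?_⟩
    rw [hasFiniteIntegral_iff_ofReal (Filter.Eventually.of_forall hf0), hf1]
    exact one_lt_top
  have hIf : ∫ x, f x ∂μ = 1 := by
    rw [integral_eq_lintegral_of_nonneg_ae (Filter.Eventually.of_forall hf0)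
      hf.aestronglyMeasurable, hf1]
    simp
  -- positivity of I = ∫ e^φ
  have hμ : μ ≠ 0 := by
    intro h
    rw [h] at hf1
    simp at hf1
  have hI : 0 < ∫ x, Real.exp (φ x) ∂μ := by
    rw [integral_pos_iff_support_of_nonneg (fun x => (Real.exp_pos _).le) hexp]
    have hs : (Function.support fun x => Real.exp (φ x)) = Set.univ := by
      ext x; simp [Function.support, Real.exp_ne_zero]
    rw [hs]
    simpa [pos_iff_ne_zero, Measure.measure_univ_eq_zero] using hμ
  set S := ∫ x, f x * Real.log (f x) ∂μ with hS
  set I := ∫ x, Real.exp (φ x) ∂μ with hIdef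
  -- positive part integrable
  have hpos : Integrable (fun x => max (f x * φ x) 0) μ := by
    refine Integrable.mono' (hent.abs.add hexp)
      ((hfφmeas.max measurable_const).aestronglyMeasurable) ?_
    filter_upwards with x
    simp only [Pi.add_apply]
    rw [Real.norm_eq_abs, abs_of_nonneg (le_max_right _ _), max_le_iff]
    have h1 := mul_le_entropy_aux (f x) (φ x) (hf0 x)
    have h2 := le_abs_self (f x * Real.log (f x))
    have h3 := hf0 x
    have h4 := (Real.exp_pos (φ x)).le
    constructor
    · linarith
    · positivity
  refine ⟨hpos, ?_⟩
  set A := ∫⁻ x, ENNReal.ofReal (f x * φ x) ∂μ with hA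
  set B := ∫⁻ x, ENNReal.ofReal (-(f x * φ x)) ∂μ with hB
  have hAfin : A ≠ ⊤ := by
    have hAeq : A = ∫⁻ x, ENNReal.ofReal (max (f x * φ x) 0) ∂μ := by
      rw [hA]
      exact (lintegral_congr fun x => (ofReal_max_zero _).symm)
    rw [hAeq]
    exact ((hasFiniteIntegral_iff_ofReal
      (Filter.Eventually.of_forall fun x => le_max_right _ _)).mp hpos.2).ne
  rcases eq_or_ne B ⊤ with hBtop | hBfin
  · rw [hBtop, EReal.coe_ennreal_top, EReal.sub_top]
    exact bot_le
  · -- negative part integrable, hence f*φ integrable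
    have hneg : Integrable (fun x => max (-(f x * φ x)) 0) μ := by
      refine ⟨(hfφmeas.neg.max measurable_const).aestronglyMeasurable, ?_⟩
      have h0 : 0 ≤ᵐ[μ] (fun x => max (-(f x * φ x)) 0) :=
        Filter.Eventually.of_forall fun x => le_max_right _ _
      refine (hasFiniteIntegral_iff_ofReal h0).mpr ?_
      have heq : ∫⁻ x, ENNReal.ofReal (max (-(f x * φ x)) 0) ∂μ = B :=
        lintegral_congr fun x => ofReal_max_zero _
      rw [heq]
      exact hBfin.lt_top
    have hint : Integrable (fun x => f x * φ x) μ := by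
      have heq : (fun x => f x * φ x)
          = fun x => max (f x * φ x) 0 - max (-(f x * φ x)) 0 := by
        funext x
        rcases le_total (f x * φ x) 0 with h | h
        · rw [max_eq_right h, max_eq_left (by linarith)]; ring
        · rw [max_eq_left h, max_eq_right (by linarith)]; ring
      rw [heq]
      exact hpos.sub hneg
    -- rewrite LHS as a real coercion
    have hAB : (A : EReal) - (B : EReal) = ((∫ x, f x * φ x ∂μ : ℝ) : EReal) := by
      rw [ennreal_coe_eq_coe_toReal A hAfin, ennreal_coe_eq_coe_toReal B hBfin,
        ← EReal.coe_sub, integral_eq_lintegral_pos_part_sub_lintegral_neg_part hint]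
    rw [hAB, EReal.coe_le_coe_iff]
    -- the real inequality
    have key : ∀ x, f x * φ x - f x * Real.log I
        ≤ f x * Real.log (f x) - f x + Real.exp (φ x) / I := by
      intro x
      have h1 := mul_le_entropy_aux (f x) (φ x - Real.log I) (hf0 x)
      rw [Real.exp_sub, Real.exp_log hI] at h1
      nlinarith [h1]
    have hint2 : Integrable (fun x => f x * φ x - f x * Real.log I) μ :=
      hint.sub (hfint.mul_const _)
    have hint31 : Integrable (fun x => f x * Real.log (f x) - f x) μ :=
      hent.sub hfint
    have hint3 : Integrable
        (fun x => f x * Real.log (f x) - f x + Real.exp (φ x) / I) μ :=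
      hint31.add (hexp.div_const _)
    have hmono := integral_mono hint2 hint3 key
    have e1 : ∫ x, (f x * φ x - f x * Real.log I) ∂μ
        = (∫ x, f x * φ x ∂μ) - Real.log I := by
      rw [integral_sub hint (hfint.mul_const _), integral_mul_const, hIf, one_mul]
    have e2 : ∫ x, (f x * Real.log (f x) - f x + Real.exp (φ x) / I) ∂μ = S := by
      rw [integral_add hint31 (hexp.div_const _), integral_sub hent hfint,
        integral_div, hIf, ← hIdef, ← hS, div_self hI.ne']
      ring
    rw [e1, e2] at hmono
    linarith
end

section
/- Let (Ω, μ), (Ω′, μ′), (M, ν) be σ-finite measure spaces, let f be a probability density on Ω × Ω′ (with the product measure μ × μ′), let p : Ω → M be measurable, and define p̄ : Ω × Ω′ → M × Ω′ by p̄(x,y) = (p(x), y). Assume the pushforward p̄_#(f d(μ×μ′)) is absolutely continuous with respect to ν × μ′, with density f_{(p̄)}. Set f_Y(y) := ∫_Ω f(x,y) dμ(x). Then for μ′-almost every y with 0 < f_Y(y) < ∞, the pushforward p_#(f(·|y) dμ) of the conditional density f(x|y) := f(x,y)/f_Y(y) is absolutely continuous with respect to ν, with density z ↦ f_{(p̄)}(z,y)/f_Y(y);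 in particular ∫_M f_{(p̄)}(z,y) dν(z) = f_Y(y) for μ′-almost every such y. -/
/-!
Testing `hpush` on rectangles `A ×ˢ B` shows that for each measurable `A ⊆ M`,
`∫_{p⁻¹ A} f (x, y) dμ = ∫_A fp (z, y) dν` for `μ'`-a.e. `y`. The difficulty is that the
exceptional null set depends on `A`, and the σ-algebra of `M` need not be countably generated.

Write all slices `f (·, y)` as densities, with respect to one finite measure `κ`, of functions
measurable for a σ-algebra generated by a countable π-system `C`; this is possible because `f` is
already measurable for `𝒜 ⊗ 𝓕'` with `𝒜` countably generated. Do the same for `fp` on `M`.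
Convergence on `C` of measures dominated by `κ` propagates to the whole σ-algebra and, through the
layer cake formula, to integrals; so a set integral over `S` is a continuous function of the
countably many numbers `κ (c ∩ S)`, `c ∈ C`. With the topology induced by these coordinates, the
measurable sets of `M` form a second countable space, and a.e. equality on a countable dense
family of sets extends to all of them by continuity.
-/

open MeasureTheory MeasurableSpace Set Filter Topology ENNReal

section CountableGeneration

variable {α β γ δ ε : Type*}

theorem MeasurableSpace.prod_mono_left {m₁ m₂ : MeasurableSpace α} (h : m₁ ≤ m₂)
    (mβ : MeasurableSpace β) : m₁.prod mβ ≤ m₂.prod mβ :=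
  sup_le_sup_right (comap_mono h) _

theorem exists_countable_measurableSet_prod [mα : MeasurableSpace α] [mβ : MeasurableSpace β]
    {s : Set (α × β)} (hs : MeasurableSet s) :
    ∃ b : Set (Set α), b.Countable ∧ generateFrom b ≤ mα ∧
      MeasurableSet[(generateFrom b).prod mβ] s := by
  rw [← generateFrom_prod] at hs
  induction s, hs using generateFrom_induction with
  | hC t ht =>
    obtain ⟨A, hA, B, hB, rfl⟩ := ht
    exact ⟨{A}, countable_singleton A, generateFrom_le (by simpa using hA),
      @MeasurableSet.prod _ _ (generateFrom {A}) mβ _ _ (measurableSet_generateFrom rfl) hB⟩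
  | empty => exact ⟨∅, countable_empty, generateFrom_le (by simp),
      @MeasurableSet.empty _ ((generateFrom ∅).prod mβ)⟩
  | compl t _ ih =>
    obtain ⟨b, hb, hble, ht⟩ := ih
    exact ⟨b, hb, hble, ht.compl⟩
  | iUnion t _ ih =>
    choose b hb hble ht using ih
    exact ⟨⋃ n, b n, countable_iUnion hb, generateFrom_le fun s hs =>
      let ⟨n, hn⟩ := mem_iUnion.1 hs; hble n s (measurableSet_generateFrom hn), .iUnion fun n =>
      prod_mono_left (generateFrom_mono (subset_iUnion b n)) mβ _ (ht n)⟩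

theorem exists_countable_measurable_prod [mα : MeasurableSpace α] [mβ : MeasurableSpace β]
    [MeasurableSpace δ] [CountablyGenerated δ] {g : α × β → δ} (hg : Measurable g) :
    ∃ b : Set (Set α), b.Countable ∧ generateFrom b ≤ mα ∧
      Measurable[(generateFrom b).prod mβ] g := by
  choose! b hb hble hgb using fun s (hs : s ∈ countableGeneratingSet δ) =>
    exists_countable_measurableSet_prod (hg (measurableSet_countableGeneratingSet hs))
  refine ⟨⋃ s ∈ countableGeneratingSet δ, b s, countable_countableGeneratingSet.biUnion hb,
    generateFrom_le fun t ht => ?_, Measurable.of_comap_le ?_⟩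
  · obtain ⟨s, hs, ht⟩ := mem_iUnion₂.1 ht
    exact hble s hs t (measurableSet_generateFrom ht)
  · refine (congrArg (MeasurableSpace.comap g)
      (generateFrom_countableGeneratingSet (α := δ)).symm).trans_le ?_
    rw [comap_generateFrom]
    refine generateFrom_le ?_
    rintro _ ⟨s, hs, rfl⟩
    exact prod_mono_left (generateFrom_mono (subset_biUnion_of_mem hs)) mβ _ (hgb s hs)

theorem exists_countable_measurable [mα : MeasurableSpace α] [MeasurableSpace ε]
    [CountablyGenerated ε] {h : α → ε} (hh : Measurable h) :
    ∃ b : Set (Set α), b.Countable ∧ generateFrom b ≤ mα ∧ Measurable[generateFrom b] h := by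
  refine ⟨preimage h '' countableGeneratingSet ε, countable_countableGeneratingSet.image _, ?_, ?_⟩
    <;> rw [← comap_generateFrom, generateFrom_countableGeneratingSet]
  exacts [hh.comap_le, comap_measurable h]

theorem exists_countable_isPiSystem_generateFrom_eq {b : Set (Set α)} (hb : b.Countable) :
    ∃ C : Set (Set α), C.Countable ∧ IsPiSystem C ∧ univ ∈ C ∧
      generateFrom C = generateFrom b := by
  classical
  have := hb.to_subtype
  refine ⟨range fun t : Finset b => ⋂ i ∈ t, (i : Set α), countable_range _, ?_, ⟨∅, by simp⟩,
    le_antisymm (generateFrom_le ?_) (generateFrom_le fun s hs =>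
      measurableSet_generateFrom ⟨{⟨s, hs⟩}, by simp⟩)⟩
  · rintro _ ⟨t₁, rfl⟩ _ ⟨t₂, rfl⟩ -
    exact ⟨t₁ ∪ t₂, Finset.set_biInter_inter _ _ _⟩
  · rintro _ ⟨t, rfl⟩
    exact @Finset.measurableSet_biInter _ _ (generateFrom b) _ _
      fun i _ => measurableSet_generateFrom i.2

theorem exists_finite_measure_slice_densities [mγ : MeasurableSpace γ]
    [MeasurableSpace β] {μ : Measure γ} [SigmaFinite μ] {f : γ × β → ℝ≥0∞}
    (hf : Measurable f) :
    ∃ (κ : Measure γ) (C : Set (Set γ)), IsFiniteMeasure κ ∧ C.Countable ∧ IsPiSystem C ∧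
      univ ∈ C ∧ generateFrom C ≤ mγ ∧ ∀ y, ∃ w : γ → ℝ≥0∞, Measurable[generateFrom C] w ∧
        ∀ s, MeasurableSet s → ∫⁻ x in s, f (x, y) ∂μ = ∫⁻ x in s, w x ∂κ := by
  obtain ⟨ψ, hψ0, hψ, hψi⟩ := exists_pos_lintegral_lt_of_sigmaFinite μ one_ne_zero
  obtain ⟨b₁, hb₁, hb₁le, hfb⟩ := exists_countable_measurable_prod hf
  obtain ⟨b₂, hb₂, hb₂le, hψb⟩ := exists_countable_measurable hψ
  obtain ⟨C, hC, hCpi, hCuniv, hCgen⟩ :=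
    exists_countable_isPiSystem_generateFrom_eq (hb₁.union hb₂)
  have hle₁ : generateFrom b₁ ≤ generateFrom C := hCgen ▸ generateFrom_mono subset_union_left
  have hle₂ : generateFrom b₂ ≤ generateFrom C := hCgen ▸ generateFrom_mono subset_union_right
  refine ⟨μ.withDensity fun x => ψ x, C, isFiniteMeasure_withDensity (hψi.trans one_lt_top).ne,
    hC, hCpi, hCuniv, hCgen ▸ generateFrom_le fun s hs => hs.elim
      (fun h => hb₁le s (measurableSet_generateFrom h))
      (fun h => hb₂le s (measurableSet_generateFrom h)),
    fun y => ⟨fun x => f (x, y) / ψ x, ?_, fun s hs => ?_⟩⟩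
  · let := generateFrom C
    exact ((hfb.mono (prod_mono_left hle₁ _) le_rfl).comp measurable_prodMk_right).div
      (hψb.mono hle₂ le_rfl).coe_nnreal_ennreal
  · rw [setLIntegral_withDensity_eq_setLIntegral_mul_non_measurable _
      hψ.coe_nnreal_ennreal _ hs (.of_forall fun _ => coe_lt_top)]
    refine setLIntegral_congr_fun hs fun x _ => ?_
    exact (ENNReal.mul_div_cancel (coe_ne_zero.2 (hψ0 x).ne') coe_ne_top).symm

end CountableGeneration

section SetwiseConvergence

variable {γ ι : Type*} {m𝒜 m : MeasurableSpace γ} {l : Filter ι} [l.IsCountablyGenerated]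
  {ρs : ι → Measure γ} {ρ κ : Measure γ}

theorem tendsto_measure_of_tendsto_isPiSystem (h𝒜 : m𝒜 ≤ m) {C : Set (Set γ)}
    (hgen : m𝒜 = generateFrom C) (hC : IsPiSystem C) (hCuniv : univ ∈ C) [IsFiniteMeasure κ]
    (hdom : ∀ i, ρs i ≤ κ) (hρ : ρ ≤ κ)
    (hconv : ∀ c ∈ C, Tendsto (fun i => ρs i c) l (𝓝 (ρ c)))
    {s : Set γ} (hs : MeasurableSet[m𝒜] s) : Tendsto (fun i => ρs i s) l (𝓝 (ρ s)) := by
  have hfin : ∀ ν ≤ κ, ∀ t, ν t ≠ ∞ := fun ν hν t =>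
    ne_top_of_le_ne_top (measure_ne_top κ t) (hν t)
  induction s, hs using induction_on_inter hgen hC with
  | empty => simpa using tendsto_const_nhds
  | basic t ht => exact hconv t ht
  | compl t ht ih =>
    have hcompl : ∀ ν ≤ κ, ν tᶜ = ν univ - ν t := fun ν hν =>
      measure_compl (h𝒜 t ht) (hfin ν hν t)
    rw [funext fun i => hcompl _ (hdom i), hcompl ρ hρ]
    exact ENNReal.Tendsto.sub (hconv univ hCuniv) ih (.inl (hfin ρ hρ univ))
  | iUnion t hdisj ht ih =>
    have hsum : ∀ ν : Measure γ, ν (⋃ n, t n) = ∫⁻ n, ν (t n) ∂.count := fun ν => by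
      rw [lintegral_count, measure_iUnion hdisj fun n => h𝒜 _ (ht n)]
    simp only [hsum]
    refine tendsto_lintegral_filter_of_dominated_convergence (fun n => κ (t n))
      (.of_forall fun _ => measurable_of_countable _) (.of_forall fun i => .of_forall fun n =>
        hdom i (t n)) ?_ (.of_forall ih)
    rw [← hsum]
    exact measure_ne_top κ _

theorem tendsto_lintegral_of_tendsto_measure (h𝒜 : m𝒜 ≤ m) (hdom : ∀ i, ρs i ≤ κ) (hρ : ρ ≤ κ)
    (hconv : ∀ s, MeasurableSet[m𝒜] s → Tendsto (fun i => ρs i s) l (𝓝 (ρ s)))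
    {w : γ → ℝ≥0∞} (hw : Measurable[m𝒜] w) (hwi : ∫⁻ x, w x ∂κ ≠ ∞) :
    Tendsto (fun i => ∫⁻ x, w x ∂ρs i) l (𝓝 (∫⁻ x, w x ∂ρ)) := by
  have hw' : Measurable w := hw.mono h𝒜 le_rfl
  have layercake : ∀ ν ≤ κ, ∫⁻ x, w x ∂ν = ∫⁻ t in Ioi 0, ν {x | t < (w x).toReal} := by
    intro ν hν
    have hfin : ∀ᵐ x ∂ν, w x < ∞ := Measure.absolutelyContinuous_of_le hν (ae_lt_top hw' hwi)
    rw [← lintegral_eq_lintegral_meas_lt ν (.of_forall fun _ => toReal_nonneg)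
      hw'.ennreal_toReal.aemeasurable]
    exact lintegral_congr_ae (hfin.mono fun x hx => (ofReal_toReal hx.ne).symm)
  rw [funext fun i => layercake _ (hdom i), layercake ρ hρ]
  refine tendsto_lintegral_filter_of_dominated_convergence (fun t => κ {x | t < (w x).toReal})
    (.of_forall fun i => Antitone.measurable fun a b hab => measure_mono fun x hx =>
      lt_of_le_of_lt hab hx) (.of_forall fun i => .of_forall fun t => hdom i _) ?_
    (.of_forall fun t => hconv _ (measurableSet_lt measurable_const hw.ennreal_toReal))
  rw [← layercake κ le_rfl]
  exact hwi

theorem continuous_setLIntegral_of_continuous_measure_inter {X : Type*} [TopologicalSpace X]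
    [FirstCountableTopology X] (h𝒜 : m𝒜 ≤ m) {C : Set (Set γ)} (hgen : m𝒜 = generateFrom C)
    (hC : IsPiSystem C) (hCuniv : univ ∈ C) [IsFiniteMeasure κ] {s : X → Set γ}
    (hs : ∀ c ∈ C, Continuous fun x => κ (c ∩ s x)) {w : γ → ℝ≥0∞} (hw : Measurable[m𝒜] w)
    (hwi : ∫⁻ a, w a ∂κ ≠ ∞) : Continuous fun x => ∫⁻ a in s x, w a ∂κ := by
  have hCm : ∀ c ∈ C, MeasurableSet[m] c := fun c hc =>
    h𝒜 c (hgen ▸ measurableSet_generateFrom hc)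
  refine continuous_iff_continuousAt.2 fun x => ?_
  refine tendsto_lintegral_of_tendsto_measure h𝒜 (fun _ => Measure.restrict_le_self)
    Measure.restrict_le_self (fun t ht => ?_) hw hwi
  refine tendsto_measure_of_tendsto_isPiSystem h𝒜 hgen hC hCuniv
    (fun _ => Measure.restrict_le_self) Measure.restrict_le_self (fun c hc => ?_) ht
  simp only [Measure.restrict_apply (hCm c hc)]
  exact (hs c hc).continuousAt

end SetwiseConvergence

theorem ae_eq_of_forall_ae_eq_of_continuous {Ω X β : Type*} [MeasurableSpace Ω]
    [TopologicalSpace X] [TopologicalSpace.SeparableSpace X] [TopologicalSpace β] [T2Space β]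
    {μ : Measure Ω} {F G : Ω → X → β} (h : ∀ x, ∀ᵐ y ∂μ, F y x = G y x) :
    ∀ᵐ y ∂μ, Continuous (F y) → Continuous (G y) → F y = G y := by
  obtain ⟨D, hDc, hDd⟩ := TopologicalSpace.exists_countable_dense X
  filter_upwards [(ae_ball_iff hDc).2 fun x _ => h x] with y hy hF hG
  exact Continuous.ext_on hDd hF hG hy

section Slices

variable {Ω Ω' M : Type*} [MeasurableSpace Ω] [MeasurableSpace Ω'] [MeasurableSpace M]
  {μ : Measure Ω} {μ' : Measure Ω'} {ν : Measure M} {f : Ω × Ω' → ℝ≥0∞} {g : M × Ω' → ℝ≥0∞}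
  {p : Ω → M}

theorem ae_setLIntegral_preimage_eq [SFinite μ] [SigmaFinite μ'] [SFinite ν]
    (hf : Measurable f) (hg : Measurable g) (hp : Measurable p)
    (hpush : ((μ.prod μ').withDensity f).map (fun z => (p z.1, z.2)) =
      (ν.prod μ').withDensity g)
    {A : Set M} (hA : MeasurableSet A) :
    ∀ᵐ y ∂μ', ∫⁻ x in p ⁻¹' A, f (x, y) ∂μ = ∫⁻ z in A, g (z, y) ∂ν := by
  refine ae_eq_of_forall_setLIntegral_eq_of_sigmaFinite hf.lintegral_prod_left'
    hg.lintegral_prod_left' fun B hB _ => ?_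
  have hpA : Measurable fun z : Ω × Ω' => (p z.1, z.2) :=
    (hp.comp measurable_fst).prodMk measurable_snd
  have hpre : (fun z : Ω × Ω' => (p z.1, z.2)) ⁻¹' (A ×ˢ B) = (p ⁻¹' A) ×ˢ B := rfl
  have hL : ((μ.prod μ').withDensity f).map (fun z => (p z.1, z.2)) (A ×ˢ B) =
      ∫⁻ y in B, ∫⁻ x in p ⁻¹' A, f (x, y) ∂μ ∂μ' := by
    rw [Measure.map_apply hpA (hA.prod hB), withDensity_apply _ (hpA (hA.prod hB)), hpre,
      ← Measure.prod_restrict, lintegral_prod_symm _ hf.aemeasurable]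
  have hR : (ν.prod μ').withDensity g (A ×ˢ B) = ∫⁻ y in B, ∫⁻ z in A, g (z, y) ∂ν ∂μ' := by
    rw [withDensity_apply _ (hA.prod hB), ← Measure.prod_restrict,
      lintegral_prod_symm _ hg.aemeasurable]
  rw [← hL, ← hR, hpush]

theorem ae_map_withDensity_slice_eq [SigmaFinite μ] [SigmaFinite μ'] [SigmaFinite ν]
    (hf : Measurable f) (hg : Measurable g) (hp : Measurable p)
    (hpush : ((μ.prod μ').withDensity f).map (fun z => (p z.1, z.2)) =
      (ν.prod μ').withDensity g) :
    ∀ᵐ y ∂μ', ∫⁻ x, f (x, y) ∂μ ≠ ∞ →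
      (μ.withDensity fun x => f (x, y)).map p = ν.withDensity fun z => g (z, y) := by
  obtain ⟨κ, C, _, hC, hCpi, hCuniv, hCle, hf'⟩ :=
    exists_finite_measure_slice_densities (μ := μ) hf
  obtain ⟨κ', C', _, hC', hCpi', hCuniv', hCle', hg'⟩ :=
    exists_finite_measure_slice_densities (μ := ν) hg
  have := hC.to_subtype
  have := hC'.to_subtype
  let Θ : {A : Set M // MeasurableSet A} → (C → ℝ≥0∞) × (C' → ℝ≥0∞) :=
    fun A => (fun c => κ (c ∩ p ⁻¹' A), fun c => κ' (c ∩ A))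
  let _ : TopologicalSpace {A : Set M // MeasurableSet A} := .induced Θ inferInstance
  have := TopologicalSpace.secondCountableTopology_induced _ _ Θ
  have hΘ : Continuous Θ := continuous_induced_dom
  filter_upwards [ae_eq_of_forall_ae_eq_of_continuous
      (F := fun y (A : {A : Set M // MeasurableSet A}) => ∫⁻ x in p ⁻¹' A, f (x, y) ∂μ)
      (G := fun y A => ∫⁻ z in A, g (z, y) ∂ν)
      fun A => ae_setLIntegral_preimage_eq hf hg hp hpush A.2,
    ae_setLIntegral_preimage_eq hf hg hp hpush MeasurableSet.univ] with y hy hyuniv hfin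
  obtain ⟨w, hw, hfw⟩ := hf' y
  obtain ⟨w', hw', hgw'⟩ := hg' y
  have hF : Continuous fun A : {A : Set M // MeasurableSet A} =>
      ∫⁻ x in p ⁻¹' A, f (x, y) ∂μ := by
    rw [funext fun A : {A : Set M // MeasurableSet A} => hfw _ (hp A.2)]
    refine continuous_setLIntegral_of_continuous_measure_inter hCle rfl hCpi hCuniv
      (fun c hc => ((continuous_apply (⟨c, hc⟩ : C)).comp continuous_fst).comp hΘ) hw ?_
    rw [← setLIntegral_univ, ← hfw _ .univ, setLIntegral_univ]
    exact hfin
  have hG : Continuous fun A : {A : Set M // MeasurableSet A} => ∫⁻ z in A, g (z, y) ∂ν := by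
    rw [funext fun A : {A : Set M // MeasurableSet A} => hgw' _ A.2]
    refine continuous_setLIntegral_of_continuous_measure_inter hCle' rfl hCpi' hCuniv'
      (fun c hc => ((continuous_apply (⟨c, hc⟩ : C')).comp continuous_snd).comp hΘ) hw' ?_
    rw [← setLIntegral_univ, ← hgw' _ .univ, ← hyuniv, preimage_univ, setLIntegral_univ]
    exact hfin
  ext A hA
  rw [Measure.map_apply hp hA, withDensity_apply _ (hp hA), withDensity_apply _ hA]
  exact congrFun (hy hF hG) ⟨A, hA⟩

end Slices

theorem pushforward_conditional_density_general {Ω Ω' M : Type*}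
    [MeasurableSpace Ω] [MeasurableSpace Ω'] [MeasurableSpace M]
    (μ : Measure Ω) (μ' : Measure Ω') (ν : Measure M)
    [SigmaFinite μ] [SigmaFinite μ'] [SigmaFinite ν]
    (f : Ω × Ω' → ℝ) (hf : Measurable f)
    (p : Ω → M) (hp : Measurable p)
    (fp : M × Ω' → ℝ) (hfp : Measurable fp)
    (hpush : ((μ.prod μ').withDensity fun z => ENNReal.ofReal (f z)).map
        (fun z : Ω × Ω' => (p z.1, z.2)) =
      (ν.prod μ').withDensity fun w => ENNReal.ofReal (fp w)) :
    ∀ᵐ y ∂μ',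
      (0 < ∫⁻ x, ENNReal.ofReal (f (x, y)) ∂μ ∧
        ∫⁻ x, ENNReal.ofReal (f (x, y)) ∂μ < ⊤) →
      ((μ.withDensity fun x => ENNReal.ofReal
            (f (x, y) / (∫⁻ x', ENNReal.ofReal (f (x', y)) ∂μ).toReal)).map p =
        ν.withDensity fun z => ENNReal.ofReal
          (fp (z, y) / (∫⁻ x', ENNReal.ofReal (f (x', y)) ∂μ).toReal)) ∧
      ∫⁻ z, ENNReal.ofReal (fp (z, y)) ∂ν = ∫⁻ x, ENNReal.ofReal (f (x, y)) ∂μ := by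
  filter_upwards [ae_map_withDensity_slice_eq (ENNReal.measurable_ofReal.comp hf)
    (ENNReal.measurable_ofReal.comp hfp) hp hpush] with y hy ⟨hpos, hfin⟩
  set c := ∫⁻ x, ENNReal.ofReal (f (x, y)) ∂μ
  have hslice := hy hfin.ne
  have hdiv : ∀ a : ℝ, ENNReal.ofReal (a / c.toReal) = c⁻¹ * ENNReal.ofReal a := fun a => by
    rw [ENNReal.ofReal_div_of_pos (toReal_pos hpos.ne' hfin.ne), ofReal_toReal hfin.ne,
      div_eq_mul_inv, mul_comm]
  have hsets : ∀ A, MeasurableSet A → ∫⁻ x in p ⁻¹' A, ENNReal.ofReal (f (x, y)) ∂μ =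
      ∫⁻ z in A, ENNReal.ofReal (fp (z, y)) ∂ν := fun A hA => by
    simpa [Measure.map_apply hp hA, withDensity_apply _ (hp hA), withDensity_apply _ hA]
      using congrArg (· A) hslice
  refine ⟨Measure.ext fun A hA => ?_, by simpa using (hsets univ .univ).symm⟩
  simp only [Measure.map_apply hp hA, withDensity_apply _ (hp hA), withDensity_apply _ hA, hdiv,
    lintegral_const_mul' _ _ (inv_ne_top.2 hpos.ne'), hsets _ hA]

/-- **Consistency of pushforward and conditional densities** (Proposition 2.6 of
the paper): if `f` is a probability density on `Ω × Ω'`, `p : Ω → M` is measurable,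
`p̄(x,y) = (p x, y)`, and the pushforward of `f d(μ×μ')` under `p̄` has density
`fp` with respect to `ν × μ'`, then for `μ'`-a.e. `y` with `0 < f_Y(y) < ∞`, the
pushforward of the conditional density `f(·|y)` under `p` has density
`fp(·,y)/f_Y(y)` with respect to `ν`; in particular `∫ fp(z,y) dν(z) = f_Y(y)`. -/
theorem pushforward_conditional_density {Ω Ω' M : Type*}
    [MeasurableSpace Ω] [MeasurableSpace Ω'] [MeasurableSpace M]
    (μ : Measure Ω) (μ' : Measure Ω') (ν : Measure M)
    [SigmaFinite μ] [SigmaFinite μ'] [SigmaFinite ν]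
    (f : Ω × Ω' → ℝ) (hf : Measurable f) (hf0 : ∀ z, 0 ≤ f z)
    (hf1 : ∫⁻ z, ENNReal.ofReal (f z) ∂(μ.prod μ') = 1)
    (p : Ω → M) (hp : Measurable p)
    (fp : M × Ω' → ℝ) (hfp : Measurable fp) (hfp0 : ∀ w, 0 ≤ fp w)
    (hpush : ((μ.prod μ').withDensity fun z => ENNReal.ofReal (f z)).map
        (fun z : Ω × Ω' => (p z.1, z.2)) =
      (ν.prod μ').withDensity fun w => ENNReal.ofReal (fp w)) :
    ∀ᵐ y ∂μ',
      (0 < ∫⁻ x, ENNReal.ofReal (f (x, y)) ∂μ ∧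
        ∫⁻ x, ENNReal.ofReal (f (x, y)) ∂μ < ⊤) →
      ((μ.withDensity fun x => ENNReal.ofReal
            (f (x, y) / (∫⁻ x', ENNReal.ofReal (f (x', y)) ∂μ).toReal)).map p =
        ν.withDensity fun z => ENNReal.ofReal
          (fp (z, y) / (∫⁻ x', ENNReal.ofReal (f (x', y)) ∂μ).toReal)) ∧
      ∫⁻ z, ENNReal.ofReal (fp (z, y)) ∂ν = ∫⁻ x, ENNReal.ofReal (f (x, y)) ∂μ :=
  pushforward_conditional_density_general μ μ' ν f hf p hp fp hfp hpush
end

section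
/- Let (Ω, μ) be a measure space, m ≥ 1, and for 1 ≤ j ≤ m let (M_j, ν_j) be a measure space and p_j : Ω → M_j a measurable map. Fix D ∈ ℝ and c_j > 0. Suppose that for all non-negative measurable functions f_j : M_j → [0,∞), ∫_Ω ∏_{j=1}^{m} f_j(p_j(x)) dμ(x) ≤ e^D ∏_{j=1}^{m} (∫_{M_j} f_j^{1/c_j} dν_j)^{c_j}. Then for every probability density f on Ω such that S(f) is finite and, for each j, the pushforward (p_j)_#(f dμ) is absolutely continuous with respect to ν_j with density f_{(p_j)} of finite entropy, the subadditivity of entropy holds: ∑_{j=1}^{m} c_j S(f_{(p_j)}) ≤ S(f) + D. -/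
open MeasureTheory ENNReal

/-!
Testing the Brascamp–Lieb inequality on `g_j = f_{(p_j)}^{c_j}`, which has `∫ g_j^{1/c_j} = 1`,
shows that `G x = ∏_j f_{(p_j)}(p_j x)^{c_j}` satisfies `∫ G dμ ≤ e^D`. Gibbs' inequality, i.e.
`ln t ≤ t - 1` at `t = e^{-D} G / f` integrated against `f dμ`, turns this into
`∫ f ln G dμ ≤ S(f) + D`. Finally `∫ f ln G dμ = ∑_j c_j ∫ f ln f_{(p_j)} ∘ p_j dμ`, and each
of these integrals is `S(f_{(p_j)})` because `f_{(p_j)} dν_j` is the pushforward of `f dμ`.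
-/

namespace Real

theorem mul_log_le_mul_log_add_sub {a b : ℝ} (ha : 0 ≤ a) (hb : 0 ≤ b) (hab : 0 < a → 0 < b) :
    a * log b ≤ a * log a + b - a := by
  rcases ha.eq_or_lt with rfl | ha
  · simpa using hb
  have hb := hab ha
  have key := mul_le_mul_of_nonneg_left (log_le_sub_one_of_pos (div_pos hb ha)) ha.le
  rw [log_div hb.ne' ha.ne', mul_sub_one, mul_div_cancel₀ _ ha.ne'] at key
  linarith

theorem mul_log_prod_rpow {ι : Type*} (s : Finset ι) {a : ℝ} {x c : ι → ℝ} (ha : 0 ≤ a)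
    (hx : 0 < a → ∀ j ∈ s, 0 < x j) :
    a * log (∏ j ∈ s, x j ^ c j) = ∑ j ∈ s, c j * (a * log (x j)) := by
  rcases ha.eq_or_lt with rfl | ha
  · simp
  rw [log_prod fun j hj => (rpow_pos_of_pos (hx ha j hj) _).ne', Finset.mul_sum]
  exact Finset.sum_congr rfl fun j hj => by rw [log_rpow (hx ha j hj)]; ring

end Real

open Real

section Density

variable {α β : Type*} [MeasurableSpace α] [MeasurableSpace β] {μ : Measure α} {ν : Measure β}

theorem integrable_withDensity_ofReal_iff {f : α → ℝ} (hf : Measurable f) (hf0 : ∀ x, 0 ≤ f x)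
    {φ : α → ℝ} :
    Integrable φ (μ.withDensity fun x => ENNReal.ofReal (f x)) ↔
      Integrable (fun x => f x * φ x) μ := by
  rw [integrable_withDensity_iff_integrable_smul' hf.ennreal_ofReal
    (ae_of_all _ fun _ => ofReal_lt_top)]
  simp only [toReal_ofReal (hf0 _), smul_eq_mul]

theorem integral_withDensity_ofReal {f : α → ℝ} (hf : Measurable f) (hf0 : ∀ x, 0 ≤ f x)
    (φ : α → ℝ) :
    ∫ x, φ x ∂(μ.withDensity fun x => ENNReal.ofReal (f x)) = ∫ x, f x * φ x ∂μ := by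
  rw [integral_withDensity_eq_integral_toReal_smul hf.ennreal_ofReal
    (ae_of_all _ fun _ => ofReal_lt_top)]
  simp only [toReal_ofReal (hf0 _), smul_eq_mul]

theorem integral_mul_log_le_of_lintegral_le {f g : α → ℝ} (D : ℝ) (hf : Measurable f)
    (hf0 : ∀ x, 0 ≤ f x) (hg : Measurable g) (hg0 : ∀ x, 0 ≤ g x)
    (hf1 : ∫⁻ x, ENNReal.ofReal (f x) ∂μ = 1)
    (hgD : ∫⁻ x, ENNReal.ofReal (g x) ∂μ ≤ ENNReal.ofReal (exp D))
    (hfg : ∀ᵐ x ∂μ, 0 < f x → 0 < g x)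
    (hflogf : Integrable (fun x => f x * log (f x)) μ)
    (hflogg : Integrable (fun x => f x * log (g x)) μ) :
    ∫ x, f x * log (g x) ∂μ ≤ ∫ x, f x * log (f x) ∂μ + D := by
  have hfi : Integrable f μ :=
    (lintegral_ofReal_ne_top_iff_integrable hf.aestronglyMeasurable (ae_of_all _ hf0)).1
      (by simp [hf1])
  have hgi : Integrable g μ :=
    (lintegral_ofReal_ne_top_iff_integrable hg.aestronglyMeasurable (ae_of_all _ hg0)).1
      (ne_top_of_le_ne_top ofReal_ne_top hgD)
  have hf_int : ∫ x, f x ∂μ = 1 := by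
    rw [integral_eq_lintegral_of_nonneg_ae (ae_of_all _ hf0) hf.aestronglyMeasurable, hf1,
      toReal_one]
  have hg_int : exp (-D) * ∫ x, g x ∂μ ≤ 1 := by
    have : ∫ x, g x ∂μ ≤ exp D := by
      rw [← ofReal_le_ofReal_iff (exp_pos D).le, ofReal_integral_eq_lintegral_ofReal hgi
        (ae_of_all _ hg0)]
      exact hgD
    calc exp (-D) * ∫ x, g x ∂μ ≤ exp (-D) * exp D := by gcongr
      _ = 1 := by rw [← exp_add, neg_add_cancel, exp_zero]
  -- `mul_log_le_mul_log_add_sub` at `b = e^{-D} g x`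
  have hpt : ∀ᵐ x ∂μ,
      f x * log (g x) ≤ f x * log (f x) + D * f x + (exp (-D) * g x - f x) := by
    filter_upwards [hfg] with x hx
    have key := mul_log_le_mul_log_add_sub (hf0 x) (mul_nonneg (exp_pos (-D)).le (hg0 x))
      fun h => mul_pos (exp_pos (-D)) (hx h)
    rcases (hf0 x).eq_or_lt with h | h
    · simp only [← h, zero_mul, mul_zero, zero_add, sub_zero]
      exact mul_nonneg (exp_pos (-D)).le (hg0 x)
    · rw [log_mul (exp_pos (-D)).ne' (hx h).ne', log_exp, mul_add] at key
      linarith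
  have hI₁ := hflogf.add (hfi.const_mul D)
  have hI₂ := (hgi.const_mul (exp (-D))).sub hfi
  calc ∫ x, f x * log (g x) ∂μ
      ≤ ∫ x, f x * log (f x) + D * f x + (exp (-D) * g x - f x) ∂μ :=
        integral_mono_ae hflogg (hI₁.add hI₂) hpt
    _ = ∫ x, f x * log (f x) ∂μ + D + (exp (-D) * ∫ x, g x ∂μ - 1) := by
        rw [integral_add (f := fun x => f x * log (f x) + D * f x)
            (g := fun x => exp (-D) * g x - f x) hI₁ hI₂,
          integral_add (g := fun x => D * f x) hflogf (hfi.const_mul D),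
          integral_sub (f := fun x => exp (-D) * g x) (hgi.const_mul _) hfi,
          integral_const_mul, integral_const_mul, hf_int, mul_one]
    _ ≤ ∫ x, f x * log (f x) ∂μ + D := by linarith

variable {p : α → β} {f : α → ℝ} {g : β → ℝ}

theorem lintegral_ofReal_eq_of_map_withDensity (hp : Measurable p)
    (hpush : (μ.withDensity fun x => ENNReal.ofReal (f x)).map p =
      ν.withDensity fun t => ENNReal.ofReal (g t)) :
    ∫⁻ t, ENNReal.ofReal (g t) ∂ν = ∫⁻ x, ENNReal.ofReal (f x) ∂μ := by
  simpa [Measure.map_apply hp MeasurableSet.univ] using (congrArg (· Set.univ) hpush).symm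

theorem ae_pos_comp_of_map_withDensity (hp : Measurable p) (hf : Measurable f)
    (hg : Measurable g)
    (hpush : (μ.withDensity fun x => ENNReal.ofReal (f x)).map p =
      ν.withDensity fun t => ENNReal.ofReal (g t)) :
    ∀ᵐ x ∂μ, 0 < f x → 0 < g (p x) := by
  have hν : ∀ᵐ t ∂ν.withDensity fun t => ENNReal.ofReal (g t), 0 < g t :=
    (ae_withDensity_iff hg.ennreal_ofReal).2 <| ae_of_all _ fun t ht => by
      simpa using ht
  rw [← hpush] at hν
  have hμ := ae_of_ae_map hp.aemeasurable hν
  rw [ae_withDensity_iff hf.ennreal_ofReal] at hμ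
  filter_upwards [hμ] with x hx hfx using hx (by simpa using hfx)

theorem integrable_mul_comp_iff_of_map_withDensity (hp : Measurable p) (hf : Measurable f)
    (hf0 : ∀ x, 0 ≤ f x) (hg : Measurable g) (hg0 : ∀ t, 0 ≤ g t)
    (hpush : (μ.withDensity fun x => ENNReal.ofReal (f x)).map p =
      ν.withDensity fun t => ENNReal.ofReal (g t))
    {φ : β → ℝ} (hφ : Measurable φ) :
    Integrable (fun x => f x * φ (p x)) μ ↔ Integrable (fun t => g t * φ t) ν := by
  rw [← integrable_withDensity_ofReal_iff hf hf0, ← integrable_withDensity_ofReal_iff hg hg0,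
    ← hpush, integrable_map_measure hφ.aestronglyMeasurable hp.aemeasurable]
  rfl

theorem integral_mul_comp_of_map_withDensity (hp : Measurable p) (hf : Measurable f)
    (hf0 : ∀ x, 0 ≤ f x) (hg : Measurable g) (hg0 : ∀ t, 0 ≤ g t)
    (hpush : (μ.withDensity fun x => ENNReal.ofReal (f x)).map p =
      ν.withDensity fun t => ENNReal.ofReal (g t))
    {φ : β → ℝ} (hφ : Measurable φ) :
    ∫ x, f x * φ (p x) ∂μ = ∫ t, g t * φ t ∂ν := by
  rw [← integral_withDensity_ofReal hf hf0, ← integral_withDensity_ofReal hg hg0, ← hpush,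
    integral_map hp.aemeasurable hφ.aestronglyMeasurable]

end Density

section BrascampLieb

variable {Ω ι : Type*} [MeasurableSpace Ω] [Fintype ι] {M : ι → Type*}
  [∀ j, MeasurableSpace (M j)]

def BrascampLieb (μ : Measure Ω) (ν : ∀ j, Measure (M j)) (p : ∀ j, Ω → M j) (c : ι → ℝ)
    (D : ℝ) : Prop :=
  ∀ g : ∀ j, M j → ℝ, (∀ j, Measurable (g j)) → (∀ j t, 0 ≤ g j t) →
    ∫⁻ x, ∏ j, ENNReal.ofReal (g j (p j x)) ∂μ ≤
      ENNReal.ofReal (exp D) * ∏ j, (∫⁻ t, ENNReal.ofReal (g j t ^ (1 / c j)) ∂ν j) ^ (c j)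

theorem BrascampLieb.lintegral_prod_rpow_le {μ : Measure Ω} {ν : ∀ j, Measure (M j)}
    {p : ∀ j, Ω → M j} {c : ι → ℝ} {D : ℝ} (hBL : BrascampLieb μ ν p c D) (hc : ∀ j, c j ≠ 0)
    {h : ∀ j, M j → ℝ} (hh : ∀ j, Measurable (h j)) (hh0 : ∀ j t, 0 ≤ h j t)
    (hh1 : ∀ j, ∫⁻ t, ENNReal.ofReal (h j t) ∂ν j = 1) :
    ∫⁻ x, ENNReal.ofReal (∏ j, h j (p j x) ^ c j) ∂μ ≤ ENNReal.ofReal (exp D) := by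
  have hinv : ∀ j t, (h j t ^ c j) ^ (1 / c j) = h j t := fun j t => by
    rw [← Real.rpow_mul (hh0 j t), mul_one_div_cancel (hc j), Real.rpow_one]
  calc ∫⁻ x, ENNReal.ofReal (∏ j, h j (p j x) ^ c j) ∂μ
      = ∫⁻ x, ∏ j, ENNReal.ofReal (h j (p j x) ^ c j) ∂μ := by
        simp_rw [ofReal_prod_of_nonneg fun j _ => rpow_nonneg (hh0 j _) (c j)]
    _ ≤ ENNReal.ofReal (exp D) *
          ∏ j, (∫⁻ t, ENNReal.ofReal ((h j t ^ c j) ^ (1 / c j)) ∂ν j) ^ c j :=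
        hBL _ (fun j => (hh j).pow_const _) fun j t => rpow_nonneg (hh0 j t) _
    _ = ENNReal.ofReal (exp D) := by
        simp only [hinv, hh1, ENNReal.one_rpow, Finset.prod_const_one, mul_one]

end BrascampLieb

theorem brascamp_lieb_implies_entropy_subadditivity_general
    {Ω : Type*} [MeasurableSpace Ω] (μ : Measure Ω)
    (m : ℕ)
    (M : Fin m → Type*) [∀ j, MeasurableSpace (M j)] (ν : ∀ j, Measure (M j))
    (p : ∀ j, Ω → M j) (hp : ∀ j, Measurable (p j))
    (D : ℝ) (c : Fin m → ℝ) (hc : ∀ j, 0 < c j)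
    (hBL : ∀ g : ∀ j, M j → ℝ, (∀ j, Measurable (g j)) → (∀ j t, 0 ≤ g j t) →
      ∫⁻ x, ∏ j, ENNReal.ofReal (g j (p j x)) ∂μ ≤
        ENNReal.ofReal (Real.exp D) *
          ∏ j, (∫⁻ t, ENNReal.ofReal (g j t ^ (1 / c j)) ∂ν j) ^ (c j))
    (f : Ω → ℝ) (hf : Measurable f) (hf0 : ∀ x, 0 ≤ f x)
    (hf1 : ∫⁻ x, ENNReal.ofReal (f x) ∂μ = 1)
    (hfent : Integrable (fun x => f x * Real.log (f x)) μ)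
    (fp : ∀ j, M j → ℝ) (hfp : ∀ j, Measurable (fp j)) (hfp0 : ∀ j t, 0 ≤ fp j t)
    (hpush : ∀ j, (μ.withDensity fun x => ENNReal.ofReal (f x)).map (p j) =
      (ν j).withDensity fun t => ENNReal.ofReal (fp j t))
    (hfpent : ∀ j, Integrable (fun t => fp j t * Real.log (fp j t)) (ν j)) :
    ∑ j, c j * ∫ t, fp j t * Real.log (fp j t) ∂ν j ≤
      (∫ x, f x * Real.log (f x) ∂μ) + D := by
  set G : Ω → ℝ := fun x => ∏ j, fp j (p j x) ^ c j
  have hpos : ∀ᵐ x ∂μ, 0 < f x → ∀ j, 0 < fp j (p j x) := by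
    filter_upwards [ae_all_iff.2 fun j => ae_pos_comp_of_map_withDensity (hp j) hf (hfp j)
      (hpush j)] with x hx hfx j using hx j hfx
  have hint : ∀ j, Integrable (fun x => f x * log (fp j (p j x))) μ := fun j =>
    (integrable_mul_comp_iff_of_map_withDensity (hp j) hf hf0 (hfp j) (hfp0 j) (hpush j)
      (hfp j).log).2 (hfpent j)
  have hlogG : (fun x => f x * log (G x)) =ᵐ[μ]
      fun x => ∑ j, c j * (f x * log (fp j (p j x))) := by
    filter_upwards [hpos] with x hx using mul_log_prod_rpow _ (hf0 x) fun h j _ => hx h j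
  have hG : ∫⁻ x, ENNReal.ofReal (G x) ∂μ ≤ ENNReal.ofReal (exp D) :=
    BrascampLieb.lintegral_prod_rpow_le hBL (fun j => (hc j).ne') hfp hfp0 fun j =>
      (lintegral_ofReal_eq_of_map_withDensity (hp j) (hpush j)).trans hf1
  calc ∑ j, c j * ∫ t, fp j t * log (fp j t) ∂ν j
      = ∫ x, ∑ j, c j * (f x * log (fp j (p j x))) ∂μ := by
        rw [integral_finsetSum _ fun j _ => (hint j).const_mul _]
        simp_rw [integral_const_mul, integral_mul_comp_of_map_withDensity (hp _) hf hf0 (hfp _)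
          (hfp0 _) (hpush _) (hfp _).log]
    _ = ∫ x, f x * log (G x) ∂μ := (integral_congr_ae hlogG).symm
    _ ≤ ∫ x, f x * log (f x) ∂μ + D :=
      integral_mul_log_le_of_lintegral_le D hf hf0
        (Finset.measurable_prod _ fun j _ => ((hfp j).comp (hp j)).pow_const _)
        (fun x => Finset.prod_nonneg fun j _ => rpow_nonneg (hfp0 j _) _) hf1 hG
        (hpos.mono fun x hx hfx => Finset.prod_pos fun j _ => rpow_pos_of_pos (hx hfx j) _)
        hfent ((integrable_finsetSum _ fun j _ => (hint j).const_mul _).congr hlogG.symm)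

/-- **Brascamp–Lieb implies subadditivity of entropy** (Theorem 2.7(i) of the paper,
after Carlen–Cordero-Erausquin): if the Brascamp–Lieb inequality
`∫ ∏ f_j ∘ p_j dμ ≤ e^D ∏ (∫ f_j^{1/c_j} dν_j)^{c_j}` holds for all non-negative
measurable `f_j`, then every probability density `f` on `Ω` with finite entropy,
whose pushforwards under the `p_j` have densities `f_{(p_j)}` of finite entropy,
satisfies `∑ c_j S(f_{(p_j)}) ≤ S(f) + D`, where `S(g) = ∫ g ln g`. -/
theorem brascamp_lieb_implies_entropy_subadditivity
    {Ω : Type*} [MeasurableSpace Ω] (μ : Measure Ω)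
    (m : ℕ) (hm : 1 ≤ m)
    (M : Fin m → Type*) [∀ j, MeasurableSpace (M j)] (ν : ∀ j, Measure (M j))
    (p : ∀ j, Ω → M j) (hp : ∀ j, Measurable (p j))
    (D : ℝ) (c : Fin m → ℝ) (hc : ∀ j, 0 < c j)
    (hBL : ∀ g : ∀ j, M j → ℝ, (∀ j, Measurable (g j)) → (∀ j t, 0 ≤ g j t) →
      ∫⁻ x, ∏ j, ENNReal.ofReal (g j (p j x)) ∂μ ≤
        ENNReal.ofReal (Real.exp D) *
          ∏ j, (∫⁻ t, ENNReal.ofReal (g j t ^ (1 / c j)) ∂ν j) ^ (c j))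
    (f : Ω → ℝ) (hf : Measurable f) (hf0 : ∀ x, 0 ≤ f x)
    (hf1 : ∫⁻ x, ENNReal.ofReal (f x) ∂μ = 1)
    (hfent : Integrable (fun x => f x * Real.log (f x)) μ)
    (fp : ∀ j, M j → ℝ) (hfp : ∀ j, Measurable (fp j)) (hfp0 : ∀ j t, 0 ≤ fp j t)
    (hpush : ∀ j, (μ.withDensity fun x => ENNReal.ofReal (f x)).map (p j) =
      (ν j).withDensity fun t => ENNReal.ofReal (fp j t))
    (hfpent : ∀ j, Integrable (fun t => fp j t * Real.log (fp j t)) (ν j)) :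
    ∑ j, c j * ∫ t, fp j t * Real.log (fp j t) ∂ν j ≤
      (∫ x, f x * Real.log (f x) ∂μ) + D :=
  brascamp_lieb_implies_entropy_subadditivity_general μ m M ν p hp D c hc hBL f hf hf0 hf1 hfent fp
    hfp hfp0 hpush hfpent
end

section
/- Let H(d,α) and H(d′,α′) be two corank 1 Carnot groups, with projections {π_j}_{j=1}^{m} (m = d+2n) and {π′_ℓ}_{ℓ=1}^{m′} (m′ = d′+2n′) respectively. Suppose there are c_j > 0 (1 ≤ j ≤ m), c′_ℓ > 0 (1 ≤ ℓ ≤ m′) and D, D′ ∈ ℝ with A := ∑_{j} c_j − 1 > 0 and B := ∑_{ℓ} c′_ℓ − 1 > 0 such that for all non-negative measurable functions: ∫_{ℝ^{d+2n+1}} ∏_{j=1}^{m} f_j(π_j(z)) dz ≤ e^D ∏_{j=1}^{m} ‖f_j‖_{1/c_j} and ∫_{ℝ^{d′+2n′+1}} ∏_{ℓ=1}^{m′} g_ℓ(π′_ℓ(w)) dw ≤ e^{D′} ∏_{ℓ=1}^{m′} ‖g_ℓ‖_{1/c′_ℓ}. Then on ℝ^{d+2n+1} × ℝ^{d′+2n′+1},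 with maps p̄_j(z,w) := (π_j(z), w) for 1 ≤ j ≤ m and p̄_{m+ℓ}(z,w) := (z, π′_ℓ(w)) for 1 ≤ ℓ ≤ m′, one has ∫ ∏_{j=1}^{m+m′} f_j(p̄_j(z,w)) dz dw ≤ e^{D̄} ∏_{j=1}^{m+m′} ‖f_j‖_{1/c̄_j} for all non-negative measurable f₁, …, f_{m+m′}, where D̄ := (B·D + A·D′)/(A+B+AB), c̄_j := c_j·B/(A+B+AB) for 1 ≤ j ≤ m, and c̄_{m+ℓ} := c′_ℓ·A/(A+B+AB) for 1 ≤ ℓ ≤ m′. -/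
open MeasureTheory ENNReal

/-!
Put `K = A + B + AB`, `θ = B / K` and `θ' = A / K`, so that `θ ∑ c_j + θ' = 1` and
`θ + θ' r = 1` with `r = ∑ c'_ℓ ≥ 1`. For fixed `w`, Hölder's inequality in `z` with exponents
`1/θ` and `1/(1-θ)`, followed by the inequality on the first group, bounds the `z`-integral by
partial norms of the `f_j(·, w)` times the `L^{1/(1-θ)}_z` norm of `∏ g_ℓ`; Hölder in `w` with
weights `θ c_j` and `θ'` separates these factors. What remains is an `L^r_w L^{1/(1-θ)}_z` mixed
norm of `∏ g_ℓ(z, π'_ℓ w)`, which Minkowski's integral inequality bounds by the reversed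
`L^1_z L^r_w` norm; there the inequality on the second group for fixed `z` and Hölder in `z` with
weights `c'_ℓ / r` finish the proof.
-/

section Minkowski

variable {α β : Type*} [MeasurableSpace α] [MeasurableSpace β] {μ : Measure α} {ν : Measure β}

theorem lintegral_le_of_forall_le_of_lintegral_ne_top [SigmaFinite μ] {f : α → ℝ≥0∞}
    (hf : Measurable f) {C : ℝ≥0∞}
    (h : ∀ g : α → ℝ≥0∞, Measurable g → g ≤ f → ∫⁻ x, g x ∂μ ≠ ∞ → ∫⁻ x, g x ∂μ ≤ C) :
    ∫⁻ x, f x ∂μ ≤ C := by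
  refine lintegral_le_of_forall_fin_meas_le C fun s hs hμs => ?_
  have htrunc : ∫⁻ x in s, f x ∂μ = ⨆ n : ℕ, ∫⁻ x in s, min (f x) n ∂μ := by
    rw [← lintegral_iSup (fun n => hf.min measurable_const)
      fun m n hmn x => min_le_min_left _ (Nat.cast_le.2 hmn)]
    simp_rw [← inf_iSup_eq, ENNReal.iSup_natCast, inf_top_eq]
  rw [htrunc]
  refine iSup_le fun n => ?_
  rw [← lintegral_indicator hs]
  refine h _ ((hf.min measurable_const).indicator hs)
    (Set.indicator_le fun x _ => min_le_left _ _) ?_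
  rw [lintegral_indicator hs]
  refine ne_top_of_le_ne_top (ENNReal.mul_ne_top (natCast_ne_top n) hμs) ?_
  calc ∫⁻ x in s, min (f x) n ∂μ ≤ ∫⁻ _ in s, (n : ℝ≥0∞) ∂μ :=
        lintegral_mono fun x => min_le_right _ _
    _ = n * μ s := setLIntegral_const _ _

theorem ENNReal.le_rpow_of_le_mul_rpow_one_sub_inv {a R : ℝ≥0∞} {p : ℝ} (hp : 1 ≤ p)
    (ha : a ≠ ∞) (h : a ≤ R * a ^ (1 - p⁻¹)) : a ≤ R ^ p := by
  have hp0 : 0 < p := by linarith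
  rcases eq_or_ne a 0 with rfl | ha0
  · exact zero_le
  rw [← ENNReal.rpow_inv_le_iff hp0]
  have hsplit : a = a ^ p⁻¹ * a ^ (1 - p⁻¹) := by
    rw [← ENNReal.rpow_add _ _ ha0 ha, add_sub_cancel, ENNReal.rpow_one]
  conv_lhs at h => rw [hsplit]
  exact (ENNReal.mul_le_mul_iff_left (ENNReal.rpow_pos (pos_iff_ne_zero.2 ha0) ha).ne'
    (ENNReal.rpow_ne_top_of_nonneg (sub_nonneg.2 (inv_le_one_of_one_le₀ hp)) ha)).1 h

/-- **Minkowski's integral inequality**. For minorants `T ^ p` of the left integrand with finite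
integral it follows from Hölder against `T ^ (p - 1)`; truncation gives the general case. -/
theorem lintegral_lintegral_rpow_swap_le [SigmaFinite μ] [SFinite ν] {f : α → β → ℝ≥0∞}
    (hf : Measurable (Function.uncurry f)) {p : ℝ} (hp : 1 ≤ p) :
    ∫⁻ x, (∫⁻ y, f x y ∂ν) ^ p ∂μ ≤ (∫⁻ y, (∫⁻ x, f x y ^ p ∂μ) ^ p⁻¹ ∂ν) ^ p := by
  have hp0 : 0 < p := by linarith
  have hS : Measurable fun x => ∫⁻ y, f x y ∂ν := hf.lintegral_prod_right'
  refine lintegral_le_of_forall_le_of_lintegral_ne_top (hS.pow_const p)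
    fun g hg hgS hg_top => ?_
  obtain ⟨T, hT, rfl, hTS⟩ : ∃ T : α → ℝ≥0∞, Measurable T ∧ g = (fun x => T x ^ p) ∧
      ∀ x, T x ≤ ∫⁻ y, f x y ∂ν :=
    ⟨fun x => g x ^ p⁻¹, hg.pow_const _, funext fun x => (ENNReal.rpow_inv_rpow hp0.ne' _).symm,
      fun x => (ENNReal.rpow_inv_le_iff hp0).2 (hgS x)⟩
  refine ENNReal.le_rpow_of_le_mul_rpow_one_sub_inv hp hg_top ?_
  calc ∫⁻ x, T x ^ p ∂μ ≤ ∫⁻ x, (∫⁻ y, f x y ∂ν) * T x ^ (p - 1) ∂μ := by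
        refine lintegral_mono fun x => ?_
        rw [show p = 1 + (p - 1) by ring, ENNReal.rpow_add_of_nonneg _ _ zero_le_one
          (by linarith), ENNReal.rpow_one, add_sub_cancel_left]
        gcongr
        exact hTS x
    _ = ∫⁻ x, ∫⁻ y, f x y * T x ^ (p - 1) ∂ν ∂μ := lintegral_congr fun x =>
        (lintegral_mul_const'' _ hf.of_uncurry_left.aemeasurable).symm
    _ = ∫⁻ y, ∫⁻ x, f x y * T x ^ (p - 1) ∂μ ∂ν :=
        lintegral_lintegral_swap (hf.mul ((hT.pow_const _).comp measurable_fst)).aemeasurable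
    _ ≤ ∫⁻ y, (∫⁻ x, f x y ^ p ∂μ) ^ p⁻¹ * (∫⁻ x, T x ^ p ∂μ) ^ (1 - p⁻¹) ∂ν := by
        refine lintegral_mono fun y => ?_
        have hHolder := ENNReal.lintegral_mul_norm_pow_le (μ := μ)
          ((hf.of_uncurry_right (y := y)).pow_const p).aemeasurable
          (hT.pow_const p).aemeasurable (inv_nonneg.2 hp0.le)
          (by linarith [inv_le_one_of_one_le₀ hp]) (add_sub_cancel _ 1)
        refine le_of_eq_of_le (lintegral_congr fun x => ?_) hHolder
        rw [← ENNReal.rpow_mul, ← ENNReal.rpow_mul, mul_inv_cancel₀ hp0.ne', ENNReal.rpow_one,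
          mul_one_sub, mul_inv_cancel₀ hp0.ne']
    _ = (∫⁻ y, (∫⁻ x, f x y ^ p ∂μ) ^ p⁻¹ ∂ν) * (∫⁻ x, T x ^ p ∂μ) ^ (1 - p⁻¹) :=
        lintegral_mul_const'' _
          (((hf.pow_const p).lintegral_prod_left').pow_const _).aemeasurable

end Minkowski

theorem eLpNorm_ofReal_one_div_of_nonneg {β : Type*} [MeasurableSpace β] (μ : Measure β)
    {F : β → ℝ} (hF : ∀ y, 0 ≤ F y) {e : ℝ} (he : 0 < e) :
    eLpNorm F (ENNReal.ofReal (1 / e)) μ = (∫⁻ y, ENNReal.ofReal (F y) ^ e⁻¹ ∂μ) ^ e := by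
  rw [eLpNorm_eq_lintegral_rpow_enorm_toReal (by simpa using he) ofReal_ne_top,
    toReal_ofReal (by positivity), one_div_one_div, one_div]
  simp_rw [Real.enorm_eq_ofReal (hF _)]

section BrascampLieb

variable {ι ι' X Y Z Z' : Type*} [Fintype ι] [Fintype ι']
  [MeasureSpace X] [MeasureSpace Y] [MeasureSpace Z] [MeasureSpace Z']

def BrascampLiebIneq (π : ι → X → Z) (c : ι → ℝ) (C : ℝ≥0∞) : Prop :=
  ∀ F : ι → Z → ℝ, (∀ i, Measurable (F i)) → (∀ i z, 0 ≤ F i z) →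
    ∫⁻ x, ∏ i, ENNReal.ofReal (F i (π i x)) ≤
      C * ∏ i, eLpNorm (F i) (ENNReal.ofReal (1 / c i)) volume

namespace BrascampLiebIneq

variable {π : ι → X → Z} {c : ι → ℝ} {C : ℝ≥0∞}

theorem lintegral_prod_le_of_ne_top (h : BrascampLiebIneq π c C) (hc : ∀ i, 0 < c i)
    {a : ι → Z → ℝ≥0∞} (ha : ∀ i, Measurable (a i)) (ha_top : ∀ i z, a i z ≠ ∞) :
    ∫⁻ x, ∏ i, a i (π i x) ≤ C * ∏ i, (∫⁻ z, a i z ^ (c i)⁻¹) ^ c i := by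
  have hBL := h (fun i z => (a i z).toReal) (fun i => (ha i).ennreal_toReal)
    fun _ _ => toReal_nonneg
  simp only [ofReal_toReal (ha_top _ _)] at hBL
  refine hBL.trans_eq (congrArg (C * ·) (Finset.prod_congr rfl fun i _ => ?_))
  rw [eLpNorm_ofReal_one_div_of_nonneg _ (fun _ => toReal_nonneg) (hc i)]
  simp only [ofReal_toReal (ha_top _ _)]

theorem lintegral_prod_mul_le (h : BrascampLiebIneq π c C) (hc : ∀ i, 0 < c i)
    (hπ : ∀ i, Measurable (π i)) {θ : ℝ} (hθ₀ : 0 < θ) (hθ₁ : θ < 1)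
    {a : ι → Z → ℝ≥0∞} (ha : ∀ i, Measurable (a i)) (ha_top : ∀ i z, a i z ≠ ∞)
    {Ψ : X → ℝ≥0∞} (hΨ : Measurable Ψ) :
    ∫⁻ x, (∏ i, a i (π i x)) * Ψ x ≤
      (C * ∏ i, (∫⁻ z, a i z ^ (θ * c i)⁻¹) ^ c i) ^ θ * (∫⁻ x, Ψ x ^ (1 - θ)⁻¹) ^ (1 - θ) := by
  have hθ₁' : 0 < 1 - θ := sub_pos.2 hθ₁
  have hBL := h.lintegral_prod_le_of_ne_top hc (a := fun i z => a i z ^ θ⁻¹)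
    (fun i => (ha i).pow_const _) fun i z => rpow_ne_top_of_nonneg (by positivity) (ha_top i z)
  calc ∫⁻ x, (∏ i, a i (π i x)) * Ψ x
      = ∫⁻ x, (∏ i, a i (π i x) ^ θ⁻¹) ^ θ * (Ψ x ^ (1 - θ)⁻¹) ^ (1 - θ) := by
        simp only [← prod_rpow_of_nonneg hθ₀.le, rpow_inv_rpow hθ₀.ne', rpow_inv_rpow hθ₁'.ne']
    _ ≤ (∫⁻ x, ∏ i, a i (π i x) ^ θ⁻¹) ^ θ * (∫⁻ x, Ψ x ^ (1 - θ)⁻¹) ^ (1 - θ) :=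
        lintegral_mul_norm_pow_le
          (Finset.measurable_prod _ fun i _ => ((ha i).comp (hπ i)).pow_const _).aemeasurable
          (hΨ.pow_const _).aemeasurable hθ₀.le hθ₁'.le (add_sub_cancel θ 1)
    _ ≤ (C * ∏ i, (∫⁻ z, a i z ^ (θ * c i)⁻¹) ^ c i) ^ θ * (∫⁻ x, Ψ x ^ (1 - θ)⁻¹) ^ (1 - θ) := by
        gcongr
        refine hBL.trans_eq ?_
        simp only [← rpow_mul, mul_inv]

theorem lintegral_prod_mul_le_mixedNorm [SFinite (volume : Measure X)]
    [SFinite (volume : Measure Y)] [SFinite (volume : Measure Z)]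
    (h : BrascampLiebIneq π c C) (hc : ∀ i, 0 < c i)
    (hπ : ∀ i, Measurable (π i)) {θ θ' r : ℝ} (hθ : 0 < θ) (hθ' : 0 < θ') (hr : 0 < r)
    (hsum : θ * ∑ i, c i + θ' = 1) (hθr : θ' * r = 1 - θ)
    {φ : ι → Z × Y → ℝ≥0∞} (hφ : ∀ i, Measurable (φ i)) (hφ_top : ∀ i u, φ i u ≠ ∞)
    {Ψ : X → Y → ℝ≥0∞} (hΨ : Measurable (Function.uncurry Ψ)) :
    ∫⁻ q : X × Y, (∏ i, φ i (π i q.1, q.2)) * Ψ q.1 q.2 ≤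
      C ^ θ * (∏ i, (∫⁻ u, φ i u ^ (θ * c i)⁻¹) ^ (θ * c i)) *
        (∫⁻ y, (∫⁻ x, Ψ x y ^ (θ' * r)⁻¹) ^ r) ^ θ' := by
  have hθ₁ : θ < 1 := by nlinarith [mul_pos hθ' hr]
  set H : ι → Y → ℝ≥0∞ := fun i y => ∫⁻ z, φ i (z, y) ^ (θ * c i)⁻¹
  set M : Y → ℝ≥0∞ := fun y => (∫⁻ x, Ψ x y ^ (θ' * r)⁻¹) ^ r
  have hH : ∀ i, Measurable (H i) := fun i => ((hφ i).pow_const _).lintegral_prod_left'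
  have hM : Measurable M := (hΨ.pow_const _).lintegral_prod_left'.pow_const _
  have hfiber : ∀ y, ∫⁻ x, (∏ i, φ i (π i x, y)) * Ψ x y ≤
      C ^ θ * (M y ^ θ' * ∏ i, H i y ^ (θ * c i)) := by
    intro y
    refine (h.lintegral_prod_mul_le hc hπ hθ hθ₁ (a := fun i z => φ i (z, y))
      (fun i => (hφ i).comp measurable_prodMk_right) (fun i z => hφ_top i _)
      hΨ.of_uncurry_right).trans_eq ?_
    rw [mul_rpow_of_nonneg _ _ hθ.le, ← hθr, ← prod_rpow_of_nonneg hθ.le]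
    simp only [M, H, ← rpow_mul, mul_comm (c _) θ, mul_comm θ' r]
    ring
  calc ∫⁻ q : X × Y, (∏ i, φ i (π i q.1, q.2)) * Ψ q.1 q.2
      = ∫⁻ y, ∫⁻ x, (∏ i, φ i (π i x, y)) * Ψ x y := by
        rw [Measure.volume_eq_prod]
        exact lintegral_prod_symm' _ (by fun_prop)
    _ ≤ ∫⁻ y, C ^ θ * (M y ^ θ' * ∏ i, H i y ^ (θ * c i)) := lintegral_mono hfiber
    _ = C ^ θ * ∫⁻ y, M y ^ θ' * ∏ i, H i y ^ (θ * c i) := lintegral_const_mul _ (by fun_prop)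
    _ ≤ C ^ θ * ((∫⁻ y, M y) ^ θ' * ∏ i, (∫⁻ y, H i y) ^ (θ * c i)) := by
        gcongr
        exact lintegral_mul_prod_norm_pow_le _ hM.aemeasurable
          (fun i _ => (hH i).aemeasurable) θ' (by rw [← Finset.mul_sum]; linarith) hθ'.le
          fun i _ => (mul_pos hθ (hc i)).le
    _ = C ^ θ * (∏ i, (∫⁻ u, φ i u ^ (θ * c i)⁻¹) ^ (θ * c i)) *
          (∫⁻ y, (∫⁻ x, Ψ x y ^ (θ' * r)⁻¹) ^ r) ^ θ' := by
        have hH_int : ∀ i, ∫⁻ y, H i y = ∫⁻ u, φ i u ^ (θ * c i)⁻¹ := fun i => by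
          rw [Measure.volume_eq_prod, lintegral_prod_symm' _ ((hφ i).pow_const _)]
        simp only [hH_int, M]
        ring

variable {π' : ι' → Y → Z'} {c' : ι' → ℝ} {C' : ℝ≥0∞}

theorem lintegral_rpow_lintegral_prod_le [SFinite (volume : Measure X)]
    [SigmaFinite (volume : Measure Y)] [SFinite (volume : Measure Z')]
    (h' : BrascampLiebIneq π' c' C') (hc' : ∀ ℓ, 0 < c' ℓ) (hπ' : ∀ ℓ, Measurable (π' ℓ))
    (hr : 1 ≤ ∑ ℓ, c' ℓ) {b : ι' → X × Z' → ℝ≥0∞} (hb : ∀ ℓ, Measurable (b ℓ))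
    (hb_top : ∀ ℓ u, b ℓ u ≠ ∞) :
    ∫⁻ y, (∫⁻ x, ∏ ℓ, b ℓ (x, π' ℓ y)) ^ (∑ ℓ, c' ℓ) ≤
      C' * ∏ ℓ, (∫⁻ u, b ℓ u ^ ((∑ ℓ, c' ℓ) / c' ℓ)) ^ c' ℓ := by
  set r := ∑ ℓ, c' ℓ
  have hr₀ : 0 < r := by linarith
  set V : ι' → X → ℝ≥0∞ := fun ℓ x => ∫⁻ z', b ℓ (x, z') ^ (r / c' ℓ)
  have hV : ∀ ℓ, Measurable (V ℓ) := fun ℓ => ((hb ℓ).pow_const _).lintegral_prod_right'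
  have hfiber : ∀ x, ∫⁻ y, (∏ ℓ, b ℓ (x, π' ℓ y)) ^ r ≤ C' * ∏ ℓ, V ℓ x ^ c' ℓ := by
    intro x
    have hBL := h'.lintegral_prod_le_of_ne_top hc' (a := fun ℓ z' => b ℓ (x, z') ^ r)
      (fun ℓ => ((hb ℓ).comp measurable_prodMk_left).pow_const _)
      fun ℓ z' => rpow_ne_top_of_nonneg hr₀.le (hb_top ℓ _)
    simpa only [V, ← rpow_mul, ← div_eq_mul_inv, prod_rpow_of_nonneg hr₀.le] using hBL
  calc ∫⁻ y, (∫⁻ x, ∏ ℓ, b ℓ (x, π' ℓ y)) ^ r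
      ≤ (∫⁻ x, (∫⁻ y, (∏ ℓ, b ℓ (x, π' ℓ y)) ^ r) ^ r⁻¹) ^ r :=
        lintegral_lintegral_rpow_swap_le (f := fun y x => ∏ ℓ, b ℓ (x, π' ℓ y))
          (by fun_prop) hr
    _ ≤ (∫⁻ x, (C' * ∏ ℓ, V ℓ x ^ c' ℓ) ^ r⁻¹) ^ r := by
        gcongr with x
        exact hfiber x
    _ = (C' ^ r⁻¹ * ∫⁻ x, ∏ ℓ, V ℓ x ^ (c' ℓ / r)) ^ r := by
        rw [← lintegral_const_mul _ (by fun_prop)]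
        simp only [mul_rpow_of_nonneg _ _ (inv_nonneg.2 hr₀.le),
          ← prod_rpow_of_nonneg (inv_nonneg.2 hr₀.le), ← rpow_mul, div_eq_mul_inv]
    _ ≤ (C' ^ r⁻¹ * ∏ ℓ, (∫⁻ x, V ℓ x) ^ (c' ℓ / r)) ^ r := by
        gcongr
        exact lintegral_prod_norm_pow_le _ (fun ℓ _ => (hV ℓ).aemeasurable)
          (by rw [← Finset.sum_div, div_self hr₀.ne']) fun ℓ _ => (div_pos (hc' ℓ) hr₀).le
    _ = C' * ∏ ℓ, (∫⁻ u, b ℓ u ^ (r / c' ℓ)) ^ c' ℓ := by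
        have hV_int : ∀ ℓ, ∫⁻ x, V ℓ x = ∫⁻ u, b ℓ u ^ (r / c' ℓ) := fun ℓ => by
          rw [Measure.volume_eq_prod, lintegral_prod _ ((hb ℓ).pow_const _).aemeasurable]
        rw [mul_rpow_of_nonneg _ _ hr₀.le, ← rpow_mul, inv_mul_cancel₀ hr₀.ne', rpow_one,
          ← prod_rpow_of_nonneg hr₀.le]
        simp only [hV_int, ← rpow_mul, div_mul_cancel₀ _ hr₀.ne']

theorem lintegral_prod_mul_prod_le [SFinite (volume : Measure X)]
    [SigmaFinite (volume : Measure Y)] [SFinite (volume : Measure Z)]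
    [SFinite (volume : Measure Z')]
    (h : BrascampLiebIneq π c C) (h' : BrascampLiebIneq π' c' C')
    (hc : ∀ i, 0 < c i) (hc' : ∀ ℓ, 0 < c' ℓ)
    (hπ : ∀ i, Measurable (π i)) (hπ' : ∀ ℓ, Measurable (π' ℓ)) {θ θ' : ℝ}
    (hθ : 0 < θ) (hθ' : 0 < θ') (hsum : θ * ∑ i, c i + θ' = 1)
    (hsum' : θ + θ' * ∑ ℓ, c' ℓ = 1) (hr : 1 ≤ ∑ ℓ, c' ℓ)
    {f : ι → Z × Y → ℝ} {g : ι' → X × Z' → ℝ} (hf : ∀ i, Measurable (f i))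
    (hf₀ : ∀ i u, 0 ≤ f i u) (hg : ∀ ℓ, Measurable (g ℓ)) (hg₀ : ∀ ℓ u, 0 ≤ g ℓ u) :
    ∫⁻ q : X × Y, (∏ i, ENNReal.ofReal (f i (π i q.1, q.2))) *
        ∏ ℓ, ENNReal.ofReal (g ℓ (q.1, π' ℓ q.2)) ≤
      C ^ θ * C' ^ θ' * ((∏ i, eLpNorm (f i) (ENNReal.ofReal (1 / (θ * c i))) volume) *
        ∏ ℓ, eLpNorm (g ℓ) (ENNReal.ofReal (1 / (θ' * c' ℓ))) volume) := by
  set r := ∑ ℓ, c' ℓ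
  have hr₀ : 0 < r := by linarith
  have hX := h.lintegral_prod_mul_le_mixedNorm hc hπ hθ hθ' hr₀ hsum (by linarith)
    (φ := fun i u => ENNReal.ofReal (f i u)) (fun i => (hf i).ennreal_ofReal)
    (fun _ _ => ofReal_ne_top) (Ψ := fun x y => ∏ ℓ, ENNReal.ofReal (g ℓ (x, π' ℓ y)))
    (by fun_prop)
  have hY := h'.lintegral_rpow_lintegral_prod_le hc' hπ' hr
    (b := fun ℓ u => ENNReal.ofReal (g ℓ u) ^ (θ' * r)⁻¹)
    (fun ℓ => (hg ℓ).ennreal_ofReal.pow_const _)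
    fun ℓ u => rpow_ne_top_of_nonneg (by positivity) ofReal_ne_top
  simp only [← prod_rpow_of_nonneg (inv_nonneg.2 (mul_pos hθ' hr₀).le)] at hX
  refine hX.trans ?_
  calc _ ≤ C ^ θ * (∏ i, (∫⁻ u, ENNReal.ofReal (f i u) ^ (θ * c i)⁻¹) ^ (θ * c i)) *
        (C' * ∏ ℓ, (∫⁻ u, (ENNReal.ofReal (g ℓ u) ^ (θ' * r)⁻¹) ^ (r / c' ℓ)) ^ c' ℓ) ^ θ' :=
        mul_le_mul_right (rpow_le_rpow hY hθ'.le) _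
    _ = _ := by
        simp only [eLpNorm_ofReal_one_div_of_nonneg _ (hf₀ _) (mul_pos hθ (hc _)),
          eLpNorm_ofReal_one_div_of_nonneg _ (hg₀ _) (mul_pos hθ' (hc' _))]
        have hexp : ∀ ℓ, (θ' * r)⁻¹ * (r / c' ℓ) = (θ' * c' ℓ)⁻¹ := fun ℓ => by
          field_simp
        rw [mul_rpow_of_nonneg _ _ hθ'.le, ← prod_rpow_of_nonneg hθ'.le]
        simp only [← rpow_mul, hexp, mul_comm (c' _) θ']
        ring

end BrascampLiebIneq

end BrascampLieb

theorem ofReal_exp_mul_add_mul {a b : ℝ} (ha : 0 ≤ a) (hb : 0 ≤ b) (x y : ℝ) :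
    ENNReal.ofReal (Real.exp (a * x + b * y)) =
      ENNReal.ofReal (Real.exp x) ^ a * ENNReal.ofReal (Real.exp y) ^ b := by
  rw [ofReal_rpow_of_nonneg (Real.exp_nonneg x) ha, ofReal_rpow_of_nonneg (Real.exp_nonneg y) hb,
    ← ofReal_mul (by positivity), ← Real.exp_mul, ← Real.exp_mul, ← Real.exp_add, mul_comm x,
    mul_comm y]

theorem measurable_carnotProj (d n : ℕ) (α : Fin n → ℝ) (j : Fin (d + 2*n)) :
    Measurable (carnotProj d n α j) := by
  have htshift : Measurable (tshift d n α j) := by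
    unfold tshift
    split <;> fun_prop
  refine measurable_pi_lambda _ fun i => ?_
  unfold carnotProj deleteInsert
  split
  · fun_prop
  · split <;> fun_prop

theorem product_brascamp_lieb_general (d n : ℕ) (α : Fin n → ℝ) (d' n' : ℕ) (α' : Fin n' → ℝ)
    (D D' : ℝ) (c : Fin (d + 2*n) → ℝ) (c' : Fin (d' + 2*n') → ℝ)
    (hc : ∀ j, 0 < c j) (hc' : ∀ ℓ, 0 < c' ℓ)
    (hA : 0 < ∑ j, c j - 1) (hB : 0 < ∑ ℓ, c' ℓ - 1)
    (hBL : ∀ F : Fin (d + 2*n) → (Fin (d + 2*n) → ℝ) → ℝ,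
      (∀ j, Measurable (F j)) → (∀ j y, 0 ≤ F j y) →
      ∫⁻ z : (Fin (d + 2*n) → ℝ) × ℝ,
          ∏ j, ENNReal.ofReal (F j (carnotProj d n α j z)) ≤
        ENNReal.ofReal (Real.exp D) *
          ∏ j, eLpNorm (F j) (ENNReal.ofReal (1 / c j)) volume)
    (hBL' : ∀ G : Fin (d' + 2*n') → (Fin (d' + 2*n') → ℝ) → ℝ,
      (∀ ℓ, Measurable (G ℓ)) → (∀ ℓ y, 0 ≤ G ℓ y) →
      ∫⁻ w : (Fin (d' + 2*n') → ℝ) × ℝ,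
          ∏ ℓ, ENNReal.ofReal (G ℓ (carnotProj d' n' α' ℓ w)) ≤
        ENNReal.ofReal (Real.exp D') *
          ∏ ℓ, eLpNorm (G ℓ) (ENNReal.ofReal (1 / c' ℓ)) volume)
    (f : Fin (d + 2*n) →
      ((Fin (d + 2*n) → ℝ) × ((Fin (d' + 2*n') → ℝ) × ℝ)) → ℝ)
    (g : Fin (d' + 2*n') →
      (((Fin (d + 2*n) → ℝ) × ℝ) × (Fin (d' + 2*n') → ℝ)) → ℝ)
    (hf : ∀ j, Measurable (f j)) (hf0 : ∀ j u, 0 ≤ f j u)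
    (hg : ∀ ℓ, Measurable (g ℓ)) (hg0 : ∀ ℓ u, 0 ≤ g ℓ u) :
    ∫⁻ q : ((Fin (d + 2*n) → ℝ) × ℝ) × ((Fin (d' + 2*n') → ℝ) × ℝ),
        (∏ j, ENNReal.ofReal (f j (carnotProj d n α j q.1, q.2))) *
          ∏ ℓ, ENNReal.ofReal (g ℓ (q.1, carnotProj d' n' α' ℓ q.2)) ≤
      ENNReal.ofReal (Real.exp
          (((∑ ℓ, c' ℓ - 1) * D + (∑ j, c j - 1) * D') /
            ((∑ j, c j - 1) + (∑ ℓ, c' ℓ - 1) + (∑ j, c j - 1) * (∑ ℓ, c' ℓ - 1)))) *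
        ((∏ j, eLpNorm (f j)
            (ENNReal.ofReal (1 / (c j * (∑ ℓ, c' ℓ - 1) /
              ((∑ j, c j - 1) + (∑ ℓ, c' ℓ - 1) +
                (∑ j, c j - 1) * (∑ ℓ, c' ℓ - 1))))) volume) *
          ∏ ℓ, eLpNorm (g ℓ)
            (ENNReal.ofReal (1 / (c' ℓ * (∑ j, c j - 1) /
              ((∑ j, c j - 1) + (∑ ℓ, c' ℓ - 1) +
                (∑ j, c j - 1) * (∑ ℓ, c' ℓ - 1))))) volume) := by
  set A := ∑ j, c j - 1
  set B := ∑ ℓ, c' ℓ - 1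
  have hK : 0 < A + B + A * B := by positivity
  have hθ : ∀ j, c j * B / (A + B + A * B) = B / (A + B + A * B) * c j := fun j => by ring
  have hθ' : ∀ ℓ, c' ℓ * A / (A + B + A * B) = A / (A + B + A * B) * c' ℓ := fun ℓ => by ring
  rw [show (B * D + A * D') / (A + B + A * B) =
      B / (A + B + A * B) * D + A / (A + B + A * B) * D' by ring,
    ofReal_exp_mul_add_mul (div_pos hB hK).le (div_pos hA hK).le]
  simp only [hθ, hθ']
  exact BrascampLiebIneq.lintegral_prod_mul_prod_le hBL hBL' hc hc'
    (measurable_carnotProj d n α) (measurable_carnotProj d' n' α') (div_pos hB hK)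
    (div_pos hA hK) (by field_simp; ring) (by field_simp; ring) (by linarith) hf hf0 hg hg0

/-- **Proposition 3.1 of the paper**: if Brascamp–Lieb type inequalities with
data `(c_j, D)` and `(c'_ℓ, D')` hold on the corank 1 Carnot groups `H(d,α)` and
`H(d',α')` respectively (with `A = ∑ c_j - 1 > 0`, `B = ∑ c'_ℓ - 1 > 0`), then on
the product group the inequality with constant `e^{D̄}`,
`D̄ = (B·D + A·D')/(A+B+AB)`, and exponents `1/c̄_j`, `c̄_j = c_j B/(A+B+AB)`,
`c̄_{m+ℓ} = c'_ℓ A/(A+B+AB)`, holds for the maps `p̄_j(z,w) = (π_j z, w)` and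
`p̄_{m+ℓ}(z,w) = (z, π'_ℓ w)`. -/
theorem product_brascamp_lieb (d n : ℕ) (hn : 1 ≤ n)
    (α : Fin n → ℝ) (hα : ∀ i, 0 < α i) (hmono : Monotone α)
    (d' n' : ℕ) (hn' : 1 ≤ n')
    (α' : Fin n' → ℝ) (hα' : ∀ i, 0 < α' i) (hmono' : Monotone α')
    (D D' : ℝ) (c : Fin (d + 2*n) → ℝ) (c' : Fin (d' + 2*n') → ℝ)
    (hc : ∀ j, 0 < c j) (hc' : ∀ ℓ, 0 < c' ℓ)
    (hA : 0 < ∑ j, c j - 1) (hB : 0 < ∑ ℓ, c' ℓ - 1)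
    (hBL : ∀ F : Fin (d + 2*n) → (Fin (d + 2*n) → ℝ) → ℝ,
      (∀ j, Measurable (F j)) → (∀ j y, 0 ≤ F j y) →
      ∫⁻ z : (Fin (d + 2*n) → ℝ) × ℝ,
          ∏ j, ENNReal.ofReal (F j (carnotProj d n α j z)) ≤
        ENNReal.ofReal (Real.exp D) *
          ∏ j, eLpNorm (F j) (ENNReal.ofReal (1 / c j)) volume)
    (hBL' : ∀ G : Fin (d' + 2*n') → (Fin (d' + 2*n') → ℝ) → ℝ,
      (∀ ℓ, Measurable (G ℓ)) → (∀ ℓ y, 0 ≤ G ℓ y) →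
      ∫⁻ w : (Fin (d' + 2*n') → ℝ) × ℝ,
          ∏ ℓ, ENNReal.ofReal (G ℓ (carnotProj d' n' α' ℓ w)) ≤
        ENNReal.ofReal (Real.exp D') *
          ∏ ℓ, eLpNorm (G ℓ) (ENNReal.ofReal (1 / c' ℓ)) volume)
    (f : Fin (d + 2*n) →
      ((Fin (d + 2*n) → ℝ) × ((Fin (d' + 2*n') → ℝ) × ℝ)) → ℝ)
    (g : Fin (d' + 2*n') →
      (((Fin (d + 2*n) → ℝ) × ℝ) × (Fin (d' + 2*n') → ℝ)) → ℝ)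
    (hf : ∀ j, Measurable (f j)) (hf0 : ∀ j u, 0 ≤ f j u)
    (hg : ∀ ℓ, Measurable (g ℓ)) (hg0 : ∀ ℓ u, 0 ≤ g ℓ u) :
    ∫⁻ q : ((Fin (d + 2*n) → ℝ) × ℝ) × ((Fin (d' + 2*n') → ℝ) × ℝ),
        (∏ j, ENNReal.ofReal (f j (carnotProj d n α j q.1, q.2))) *
          ∏ ℓ, ENNReal.ofReal (g ℓ (q.1, carnotProj d' n' α' ℓ q.2)) ≤
      ENNReal.ofReal (Real.exp
          (((∑ ℓ, c' ℓ - 1) * D + (∑ j, c j - 1) * D') /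
            ((∑ j, c j - 1) + (∑ ℓ, c' ℓ - 1) + (∑ j, c j - 1) * (∑ ℓ, c' ℓ - 1)))) *
        ((∏ j, eLpNorm (f j)
            (ENNReal.ofReal (1 / (c j * (∑ ℓ, c' ℓ - 1) /
              ((∑ j, c j - 1) + (∑ ℓ, c' ℓ - 1) +
                (∑ j, c j - 1) * (∑ ℓ, c' ℓ - 1))))) volume) *
          ∏ ℓ, eLpNorm (g ℓ)
            (ENNReal.ofReal (1 / (c' ℓ * (∑ j, c j - 1) /
              ((∑ j, c j - 1) + (∑ ℓ, c' ℓ - 1) +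
                (∑ j, c j - 1) * (∑ ℓ, c' ℓ - 1))))) volume) :=
  product_brascamp_lieb_general d n α d' n' α' D D' c c' hc hc' hA hB hBL hBL' f g hf hf0 hg hg0
end
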